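/- arXiv:2112.10631 — 6 statements merged into one kernel-verified Lean document; each statement's English description precedes it below -/
import Mathlib

section
/- Let r ∈ C²((0,1]) ∩ C([0,1]) with r'(R) > 0 on (0,1] be a solution of the radial equilibrium equation with r(0) > 0, and assume δ(R) = r'(R)(r(R)/R)^{n−1} is bounded on (0,1]. Then r'(R) < r(R)/R for every R ∈ (0,1], and moreover r'(R) → 0 and r(R)/R → ∞ as R → 0⁺. -/
open Real MeasureTheory Filter Set
open scoped ENNReal NNReal

noncomputable section

/-- Radial stored energy `Φ(q, v, …, v) = (κ/n)(qⁿ + (n−1)vⁿ) + h(q v^{n−1})`,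
the restriction of `Φ(v₁,…,vₙ) = (κ/n)(v₁ⁿ+⋯+vₙⁿ) + h(v₁⋯vₙ)` to points
`(q, v, …, v)`. -/
def Phi (n : ℕ) (κ : ℝ) (h : ℝ → ℝ) (q v : ℝ) : ℝ :=
  (κ / n) * (q ^ n + ((n : ℝ) - 1) * v ^ n) + h (q * v ^ (n - 1))

/-- `Φ_{,1}(q, v, …, v) = κ q^{n−1} + v^{n−1} h'(q v^{n−1})`. -/
def Phi1 (n : ℕ) (κ : ℝ) (h' : ℝ → ℝ) (q v : ℝ) : ℝ :=
  κ * q ^ (n - 1) + v ^ (n - 1) * h' (q * v ^ (n - 1))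

/-- `Φ_{,2}(q, v, …, v) = κ v^{n−1} + q v^{n−2} h'(q v^{n−1})`. -/
def Phi2 (n : ℕ) (κ : ℝ) (h' : ℝ → ℝ) (q v : ℝ) : ℝ :=
  κ * v ^ (n - 1) + q * v ^ (n - 2) * h' (q * v ^ (n - 1))

/-- Radial Cauchy stress `T(q,v) = v^{1−n} Φ_{,1}(q,v,…,v) = κ(q/v)^{n−1} + h'(q v^{n−1})`. -/
def Tstress (n : ℕ) (κ : ℝ) (h' : ℝ → ℝ) (q v : ℝ) : ℝ :=
  κ * (q / v) ^ (n - 1) + h' (q * v ^ (n - 1))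

/-- The determinant function `δ(R) = r'(R) (r(R)/R)^{n−1}`. -/
def del (n : ℕ) (r r' : ℝ → ℝ) (R : ℝ) : ℝ :=
  r' R * (r R / R) ^ (n - 1)

/-- Hypotheses on `h : (0,∞) → [0,∞)`: it is `C²` with derivative `h'` and second
derivative `h''`, `h'' > 0`, `h(d) → ∞` as `d → 0⁺`, `h(d)/d → ∞` as `d → ∞`,
`h'(d) → −∞` as `d → 0⁺` and `h'(d) → ∞` as `d → ∞`. -/
structure GoodH (h h' h'' : ℝ → ℝ) : Prop where
  nonneg : ∀ d : ℝ, 0 < d → 0 ≤ h d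
  deriv1 : ∀ d : ℝ, 0 < d → HasDerivAt h (h' d) d
  deriv2 : ∀ d : ℝ, 0 < d → HasDerivAt h' (h'' d) d
  cont2 : ContinuousOn h'' (Set.Ioi 0)
  hpp_pos : ∀ d : ℝ, 0 < d → 0 < h'' d
  lim_zero : Tendsto h (nhdsWithin 0 (Set.Ioi 0)) atTop
  lim_growth : Tendsto (fun d => h d / d) atTop atTop
  dlim_zero : Tendsto h' (nhdsWithin 0 (Set.Ioi 0)) atBot
  dlim_top : Tendsto h' atTop atTop

/-- `r ∈ C²((0,1])`, with `r, r' > 0` on `(0,1]`, solving the radial equilibrium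
equation `(d/dR)[R^{n−1} Φ_{,1}(r(R))] = (n−1) R^{n−2} Φ_{,2}(r(R))`. -/
structure RadialSol (n : ℕ) (κ : ℝ) (h' : ℝ → ℝ) (r r' r'' : ℝ → ℝ) : Prop where
  pos : ∀ R ∈ Set.Ioc (0:ℝ) 1, 0 < r R
  derivPos : ∀ R ∈ Set.Ioc (0:ℝ) 1, 0 < r' R
  hasDeriv : ∀ R ∈ Set.Ioc (0:ℝ) 1, HasDerivWithinAt r (r' R) (Set.Ioc 0 1) R
  hasDeriv2 : ∀ R ∈ Set.Ioc (0:ℝ) 1, HasDerivWithinAt r' (r'' R) (Set.Ioc 0 1) R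
  cont2 : ContinuousOn r'' (Set.Ioc 0 1)
  equil : ∀ R ∈ Set.Ioc (0:ℝ) 1,
    HasDerivWithinAt (fun s => s ^ (n - 1) * Phi1 n κ h' (r' s) (r s / s))
      (((n : ℝ) - 1) * R ^ (n - 2) * Phi2 n κ h' (r' R) (r R / R)) (Set.Ioc 0 1) R

open Topology

/-! Since `r(0) > 0`, the stretch `v = r/R` blows up at `0`, and then the bound on
`δ = r' vⁿ⁻¹` forces `r' → 0`. Expanding the equilibrium equation gives
`R Φ_{,11} r'' = (v − r') Ψ`, so `w = v − r'` solves the linear equation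
`w' = −(1 + Ψ/Φ_{,11}) w / R` with a coefficient continuous on `(0,1]`. As `w → ∞` at `0`,
uniqueness for this equation keeps `w` from ever vanishing. -/

-- Here `n = m + 2`; `Phi11 m` is `Φ_{,11}` and `Phi12 m` is `∂_v Φ_{,1}` at `(q, v, …, v)`.
def Phi11 (m : ℕ) (κ : ℝ) (h'' : ℝ → ℝ) (q v : ℝ) : ℝ :=
  κ * (m + 1) * q ^ m + v ^ (2 * m + 2) * h'' (q * v ^ (m + 1))

def Phi12 (m : ℕ) (h' h'' : ℝ → ℝ) (q v : ℝ) : ℝ :=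
  (m + 1) * (v ^ m * h' (q * v ^ (m + 1)) + q * v ^ (2 * m + 1) * h'' (q * v ^ (m + 1)))

-- `Psi` carries the divided difference `(vⁿ⁻¹ − qⁿ⁻¹)/(v − q)` as a geometric sum.
def Psi (m : ℕ) (κ : ℝ) (h'' : ℝ → ℝ) (q v : ℝ) : ℝ :=
  (m + 1) * (κ * ∑ i ∈ Finset.range (m + 1), v ^ i * q ^ (m - i)
    + q * v ^ (2 * m + 1) * h'' (q * v ^ (m + 1)))

def radialCoeff (m : ℕ) (κ : ℝ) (h'' : ℝ → ℝ) (r r' : ℝ → ℝ) (R : ℝ) : ℝ :=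
  -(1 + Psi m κ h'' (r' R) (r R / R) / Phi11 m κ h'' (r' R) (r R / R)) / R

theorem eqOn_zero_of_hasDerivWithinAt_mul_self_of_right_eq_zero {w A : ℝ → ℝ} {a b : ℝ}
    (hA : ContinuousOn A (Icc a b)) (hw : ContinuousOn w (Icc a b))
    (hw' : ∀ t ∈ Ioc a b, HasDerivWithinAt w (A t * w t) (Iic t) t) (hb : w b = 0) :
    EqOn w 0 (Icc a b) := by
  obtain ⟨K, hK⟩ := isCompact_Icc.exists_bound_of_continuousOn hA
  have hlip : ∀ t ∈ Ioc a b, LipschitzOnWith K.toNNReal (fun x => A t * x) univ := fun t ht =>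
    ((lipschitzWith_smul (A t)).weaken (by
      rw [← NNReal.coe_le_coe, coe_nnnorm, Real.coe_toNNReal']
      exact (hK t (Ioc_subset_Icc_self ht)).trans (le_max_left _ _))).lipschitzOnWith
  exact ODE_solution_unique_of_mem_Icc_left hlip hw hw' (fun _ _ => mem_univ _)
    continuousOn_const
    (fun t _ => (hasDerivWithinAt_const t (Iic t) 0).congr_deriv (mul_zero _).symm)
    (fun _ _ => mem_univ _) hb

-- At a zero of `w`, backward uniqueness would force `w = 0` down to a point where `w > 0`.
theorem pos_of_hasDerivWithinAt_mul_self {w A : ℝ → ℝ} {a b : ℝ}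
    (hA : ContinuousOn A (Ioc a b))
    (hw' : ∀ t ∈ Ioc a b, HasDerivWithinAt w (A t * w t) (Ioc a b) t)
    (hpos : ∀ᶠ t in 𝓝[>] a, 0 < w t) :
    ∀ t ∈ Ioc a b, 0 < w t := by
  intro t ht
  by_contra! hwt
  obtain ⟨c, hwc, hc⟩ := (hpos.and (Ioo_mem_nhdsGT ht.1)).exists
  obtain ⟨s, hs, hws⟩ := intermediate_value_Icc' hc.2.le
    (fun x hx => (hw' x (Icc_subset_Ioc hc.1 ht.2 hx)).continuousWithinAt.mono
      (Icc_subset_Ioc hc.1 ht.2)) ⟨hwt, hwc.le⟩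
  have hsub : Icc c s ⊆ Ioc a b := Icc_subset_Ioc hc.1 (hs.2.trans ht.2)
  have hw : ContinuousOn w (Icc c s) := fun x hx =>
    (hw' x (hsub hx)).continuousWithinAt.mono hsub
  have hw'' : ∀ x ∈ Ioc c s, HasDerivWithinAt w (A x * w x) (Iic x) x := fun x hx =>
    (hw' x (hsub (Ioc_subset_Icc_self hx))).mono_of_mem_nhdsWithin <| mem_nhdsWithin.mpr
      ⟨Ioi a, isOpen_Ioi, hc.1.trans hx.1,
        fun y hy => ⟨hy.1, hy.2.trans (hx.2.trans (hs.2.trans ht.2))⟩⟩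
  exact hwc.ne' (eqOn_zero_of_hasDerivWithinAt_mul_self_of_right_eq_zero (hA.mono hsub) hw hw''
    hws ⟨le_rfl, hs.1⟩)

theorem tendsto_nhds_zero_of_mul_pow_le {α : Type*} {l : Filter α} {q v : α → ℝ} {k : ℕ}
    {M : ℝ} (hk : k ≠ 0) (hv : Tendsto v l atTop) (hq : ∀ᶠ x in l, 0 ≤ q x)
    (hqv : ∀ᶠ x in l, q x * v x ^ k ≤ M) : Tendsto q l (𝓝 0) := by
  refine squeeze_zero' hq ?_
    ((tendsto_const_nhds (x := M)).div_atTop ((tendsto_pow_atTop hk).comp hv))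
  filter_upwards [hqv, hv.eventually_gt_atTop 0] with x hx hvx
  exact (le_div_iff₀ (pow_pos hvx k)).mpr hx

section Radial

variable {m : ℕ} {κ : ℝ} {h' h'' r r' r'' : ℝ → ℝ}

theorem Phi1_add_two (q v : ℝ) :
    Phi1 (m + 2) κ h' q v = κ * q ^ (m + 1) + v ^ (m + 1) * h' (q * v ^ (m + 1)) := rfl

theorem Phi2_add_two (q v : ℝ) :
    Phi2 (m + 2) κ h' q v = κ * v ^ (m + 1) + q * v ^ m * h' (q * v ^ (m + 1)) := rfl

theorem hasDerivWithinAt_Phi1_comp {q v : ℝ → ℝ} {q' v' x : ℝ} {s : Set ℝ}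
    (hh' : HasDerivAt h' (h'' (q x * v x ^ (m + 1))) (q x * v x ^ (m + 1)))
    (hq : HasDerivWithinAt q q' s x) (hv : HasDerivWithinAt v v' s x) :
    HasDerivWithinAt (fun y => Phi1 (m + 2) κ h' (q y) (v y))
      (Phi11 m κ h'' (q x) (v x) * q' + Phi12 m h' h'' (q x) (v x) * v') s x := by
  have hd := hh'.comp_hasDerivWithinAt x (hq.mul (hv.pow (m + 1)))
  refine (((hq.pow (m + 1)).const_mul κ).add ((hv.pow (m + 1)).mul hd)).congr_deriv ?_
  simp only [Phi11, Phi12, Pi.mul_apply, Pi.pow_apply, Function.comp_apply, Nat.add_sub_cancel]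
  push_cast
  ring

theorem Phi2_sub_Phi1 (q v : ℝ) :
    (m + 1) * (Phi2 (m + 2) κ h' q v - Phi1 (m + 2) κ h' q v) + Phi12 m h' h'' q v * (v - q)
      = (v - q) * Psi m κ h'' q v := by
  have hgeom := geom_sum₂_mul v q (m + 1)
  simp only [Nat.add_sub_cancel] at hgeom
  rw [Phi1_add_two, Phi2_add_two]
  simp only [Phi12, Psi]
  linear_combination (-((m : ℝ) + 1) * κ) * hgeom

theorem Phi11_pos (hκ : 0 < κ) {q v : ℝ} (hq : 0 < q) (hv : 0 < v)
    (hh'' : 0 ≤ h'' (q * v ^ (m + 1))) : 0 < Phi11 m κ h'' q v := by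
  unfold Phi11
  positivity

theorem RadialSol.hasDerivWithinAt_div_id (hr : RadialSol (m + 2) κ h' r r' r'') {R : ℝ}
    (hR : R ∈ Ioc (0 : ℝ) 1) :
    HasDerivWithinAt (fun x => r x / x) ((r' R - r R / R) / R) (Ioc 0 1) R := by
  refine ((hr.hasDeriv R hR).div (hasDerivWithinAt_id R _) hR.1.ne').congr_deriv ?_
  have hR0 := hR.1.ne'
  simp only [id]
  field_simp

theorem RadialSol.mul_Phi11_mul (hr : RadialSol (m + 2) κ h' r r' r'')
    (hh' : ∀ d : ℝ, 0 < d → HasDerivAt h' (h'' d) d) {R : ℝ} (hR : R ∈ Ioc (0 : ℝ) 1) :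
    R * Phi11 m κ h'' (r' R) (r R / R) * r'' R
      = (r R / R - r' R) * Psi m κ h'' (r' R) (r R / R) := by
  have hq := hr.derivPos R hR
  have hv : 0 < r R / R := div_pos (hr.pos R hR) hR.1
  have hPhi1 := hasDerivWithinAt_Phi1_comp (m := m) (κ := κ) (hh' _ (by positivity))
    (hr.hasDeriv2 R hR) (hr.hasDerivWithinAt_div_id hR)
  have hprod := ((hasDerivWithinAt_id R (Ioc 0 1)).pow (m + 1)).mul hPhi1
  have heq := (uniqueDiffOn_Ioc 0 1 R hR).eq_deriv _ hprod (hr.equil R hR)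
  simp only [id, Pi.pow_apply, Nat.add_sub_cancel, mul_one] at heq
  push_cast at heq
  have hdiv : R ^ (m + 1) * ((r' R - r R / R) / R) = R ^ m * (r' R - r R / R) := by
    rw [pow_succ, mul_assoc, mul_div_cancel₀ _ hR.1.ne']
  refine mul_left_cancel₀ (pow_ne_zero m hR.1.ne') ?_
  linear_combination heq + R ^ m * Phi2_sub_Phi1 (m := m) (κ := κ) (h' := h') (h'' := h'')
      (r' R) (r R / R)
    - Phi12 m h' h'' (r' R) (r R / R) * hdiv

theorem RadialSol.Phi11_pos (hr : RadialSol (m + 2) κ h' r r' r'') (hκ : 0 < κ)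
    (hh'' : ∀ d : ℝ, 0 < d → 0 ≤ h'' d) {R : ℝ} (hR : R ∈ Ioc (0 : ℝ) 1) :
    0 < Phi11 m κ h'' (r' R) (r R / R) := by
  have hq := hr.derivPos R hR
  have hv : 0 < r R / R := div_pos (hr.pos R hR) hR.1
  exact _root_.Phi11_pos hκ hq hv (hh'' _ (by positivity))

theorem RadialSol.hasDerivWithinAt_div_id_sub (hr : RadialSol (m + 2) κ h' r r' r'')
    (hκ : 0 < κ) (hh' : ∀ d : ℝ, 0 < d → HasDerivAt h' (h'' d) d)
    (hh'' : ∀ d : ℝ, 0 < d → 0 ≤ h'' d) {R : ℝ} (hR : R ∈ Ioc (0 : ℝ) 1) :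
    HasDerivWithinAt (fun x => r x / x - r' x)
      (radialCoeff m κ h'' r r' R * (r R / R - r' R)) (Ioc 0 1) R := by
  have hR0 := hR.1.ne'
  have hC := (hr.Phi11_pos hκ hh'' hR).ne'
  have hr'' : r'' R = (r R / R - r' R) * Psi m κ h'' (r' R) (r R / R)
      / (R * Phi11 m κ h'' (r' R) (r R / R)) := by
    rw [eq_div_iff (mul_ne_zero hR0 hC)]
    linear_combination hr.mul_Phi11_mul hh' hR
  refine ((hr.hasDerivWithinAt_div_id hR).sub (hr.hasDeriv2 R hR)).congr_deriv ?_
  rw [hr'', radialCoeff]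
  field_simp
  ring

theorem RadialSol.continuousOn_radialCoeff (hr : RadialSol (m + 2) κ h' r r' r'')
    (hκ : 0 < κ) (hh'' : ∀ d : ℝ, 0 < d → 0 ≤ h'' d) (hcont : ContinuousOn h'' (Ioi 0)) :
    ContinuousOn (radialCoeff m κ h'' r r') (Ioc 0 1) := by
  have hq : ContinuousOn r' (Ioc 0 1) := fun R hR => (hr.hasDeriv2 R hR).continuousWithinAt
  have hv : ContinuousOn (fun R => r R / R) (Ioc 0 1) := fun R hR =>
    (hr.hasDerivWithinAt_div_id hR).continuousWithinAt
  have hh''v : ContinuousOn (fun R => h'' (r' R * (r R / R) ^ (m + 1))) (Ioc 0 1) :=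
    hcont.comp (hq.mul (hv.pow _)) fun R hR =>
      mul_pos (hr.derivPos R hR) (pow_pos (div_pos (hr.pos R hR) hR.1) _)
  have hPsi : ContinuousOn (fun R => Psi m κ h'' (r' R) (r R / R)) (Ioc 0 1) :=
    continuousOn_const.mul ((continuousOn_const.mul (continuousOn_finsetSum _ fun i _ =>
      (hv.pow i).mul (hq.pow _))).add ((hq.mul (hv.pow _)).mul hh''v))
  have hPhi11 : ContinuousOn (fun R => Phi11 m κ h'' (r' R) (r R / R)) (Ioc 0 1) :=
    (continuousOn_const.mul (hq.pow m)).add ((hv.pow _).mul hh''v)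
  have hPhi11_ne : ∀ R ∈ Ioc (0 : ℝ) 1, Phi11 m κ h'' (r' R) (r R / R) ≠ 0 := fun R hR =>
    (hr.Phi11_pos hκ hh'' hR).ne'
  exact ((continuousOn_const.add (hPsi.div hPhi11 hPhi11_ne)).neg.div continuousOn_id
    fun R hR => hR.1.ne')

end Radial

/-- a cavitating solution of the radial equilibrium equation with
bounded determinant satisfies `r'(R) < r(R)/R` on `(0,1]`, `r'(R) → 0` and
`r(R)/R → ∞` as `R → 0⁺`. -/
theorem stmt0 (n : ℕ) (hn : 2 ≤ n) (κ : ℝ) (hκ : 0 < κ)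
    (h h' h'' : ℝ → ℝ) (hh : GoodH h h' h'')
    (r r' r'' : ℝ → ℝ) (hr : RadialSol n κ h' r r' r'')
    (hcont : ContinuousOn r (Set.Icc 0 1)) (hcav : 0 < r 0)
    (hbdd : ∃ M : ℝ, ∀ R ∈ Set.Ioc (0:ℝ) 1, del n r r' R ≤ M) :
    (∀ R ∈ Set.Ioc (0:ℝ) 1, r' R < r R / R) ∧
    Tendsto r' (nhdsWithin 0 (Set.Ioi 0)) (nhds 0) ∧
    Tendsto (fun R => r R / R) (nhdsWithin 0 (Set.Ioi 0)) atTop := by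
  obtain ⟨M, hM⟩ := hbdd
  obtain ⟨m, rfl⟩ : ∃ m, n = m + 2 := ⟨n - 2, by omega⟩
  have hIoc : Ioc (0 : ℝ) 1 ∈ 𝓝[>] 0 := Ioc_mem_nhdsGT zero_lt_one
  have hr0 : Tendsto r (𝓝[>] 0) (𝓝 (r 0)) := by
    have := (hcont 0 ⟨le_rfl, zero_le_one⟩).tendsto
    rw [nhdsWithin_Icc_eq_nhdsGE zero_lt_one] at this
    exact this.mono_left (nhdsWithin_mono _ Ioi_subset_Ici_self)
  have hv : Tendsto (fun R => r R / R) (𝓝[>] 0) atTop := by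
    simpa only [div_eq_mul_inv] using hr0.pos_mul_atTop hcav tendsto_inv_nhdsGT_zero
  have hq : Tendsto r' (𝓝[>] 0) (𝓝 0) :=
    tendsto_nhds_zero_of_mul_pow_le m.succ_ne_zero hv
      (eventually_of_mem hIoc fun R hR => (hr.derivPos R hR).le) (eventually_of_mem hIoc hM)
  have hw : ∀ᶠ R in 𝓝[>] 0, 0 < r R / R - r' R := by
    filter_upwards [hq.eventually (gt_mem_nhds one_pos), hv.eventually_gt_atTop 1] with R h1 h2
    linarith
  have hh'' : ∀ d : ℝ, 0 < d → 0 ≤ h'' d := fun d hd => (hh.hpp_pos d hd).le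
  refine ⟨fun R hR => sub_pos.mp ?_, hq, hv⟩
  exact pos_of_hasDerivWithinAt_mul_self (hr.continuousOn_radialCoeff hκ hh'' hh.cont2)
    (fun R hR => hr.hasDerivWithinAt_div_id_sub hκ hh.deriv2 hh'' hR) hw R hR
end
end

section
/- If r ∈ C²((0,1]) with r'(R) > 0 is a solution of the radial equilibrium equation, then for every R ∈ (0,1) the divergence identity holds: R^{n−1} Φ(r'(R), v(R), …, v(R)) = (d/dR)[ (Rⁿ/n)(Φ(r'(R), v(R), …, v(R)) − r'(R) Φ_{,1}(r(R))) + (r(R)ⁿ/n) T(r(R)) ]. -/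
open Real MeasureTheory Filter Set
open scoped ENNReal NNReal

noncomputable section

/-!
Since `rⁿ T = r Rⁿ⁻¹ Φ_{,1}`, the flux in brackets equals
`(Rⁿ/n) Φ + ((r - R r')/n) · Rⁿ⁻¹ Φ_{,1}`. Differentiating this with the chain rule
`Φ' = Φ_{,1} r'' + (n-1) Φ_{,2} v'` and the equilibrium equation for `(Rⁿ⁻¹ Φ_{,1})'`, every term
except `Rⁿ⁻¹ Φ` cancels: this is Noether's identity for the dilation symmetry of the radial energy.
-/

open Topology

variable {n : ℕ} {κ : ℝ} {h h' : ℝ → ℝ}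

theorem hasDerivAt_Phi (hn : n ≠ 0) {q v : ℝ → ℝ} {q' v' x : ℝ}
    (hh : HasDerivAt h (h' (q x * v x ^ (n - 1))) (q x * v x ^ (n - 1)))
    (hq : HasDerivAt q q' x) (hv : HasDerivAt v v' x) :
    HasDerivAt (fun s => Phi n κ h (q s) (v s))
      (Phi1 n κ h' (q x) (v x) * q' + (n - 1) * Phi2 n κ h' (q x) (v x) * v') x := by
  obtain ⟨m, rfl⟩ : ∃ m, n = m + 1 := Nat.exists_eq_succ_of_ne_zero hn
  refine ((((hq.pow (m + 1)).add ((hv.pow (m + 1)).const_mul ((m + 1 : ℕ) - 1 : ℝ))).const_mul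
    (κ / (m + 1 : ℕ))).add (hh.comp x (hq.mul (hv.pow m)))).congr_deriv ?_
  simp only [Phi1, Phi2, Nat.add_sub_cancel, Pi.pow_apply]
  rcases m with _ | m
  · simp [add_mul]
  · simp only [show m + 1 + 1 - 2 = m by omega, Nat.add_sub_cancel, pow_succ]
    push_cast
    field_simp
    ring

theorem energy_flux_eq (hn : n ≠ 0) {s ρ q : ℝ} (hs : s ≠ 0) (hρ : ρ ≠ 0) :
    s ^ n / n * (Phi n κ h q (ρ / s) - q * Phi1 n κ h' q (ρ / s)) +
        ρ ^ n / n * Tstress n κ h' q (ρ / s) =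
      s ^ n / n * Phi n κ h q (ρ / s) + (ρ - s * q) / n * (s ^ (n - 1) * Phi1 n κ h' q (ρ / s)) := by
  obtain ⟨m, rfl⟩ : ∃ m, n = m + 1 := Nat.exists_eq_succ_of_ne_zero hn
  simp only [Phi1, Tstress, Nat.add_sub_cancel, div_pow]
  field_simp
  ring

/-- The `Φ_{,1} r''` terms cancel because `A = R^{n-1} Φ_{,1}`, and the `Φ_{,2}` terms cancel
because `v' = (r' - v) / R`. -/
theorem hasDerivAt_energy_flux (hn : 2 ≤ n) {r r' f A : ℝ → ℝ} {R r'' P1 P2 : ℝ}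
    (hR : R ≠ 0) (hr : HasDerivAt r (r' R) R) (hr' : HasDerivAt r' r'' R)
    (hf : HasDerivAt f (P1 * r'' + (n - 1) * P2 * ((r' R * R - r R) / R ^ 2)) R)
    (hA : HasDerivAt A ((n - 1) * R ^ (n - 2) * P2) R) (hAR : A R = R ^ (n - 1) * P1) :
    HasDerivAt (fun s => s ^ n / n * f s + (r s - s * r' s) / n * A s) (R ^ (n - 1) * f R) R := by
  refine ((((hasDerivAt_pow n R).div_const (n : ℝ)).mul hf).add
    (((hr.sub ((hasDerivAt_id R).mul hr')).div_const (n : ℝ)).mul hA)).congr_deriv ?_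
  obtain ⟨m, rfl⟩ : ∃ m, n = m + 2 := ⟨n - 2, by omega⟩
  simp only [hAR, id, Pi.sub_apply, Pi.mul_apply, show m + 2 - 1 = m + 1 by omega,
    Nat.add_sub_cancel, pow_succ]
  push_cast
  field_simp
  ring

theorem stmt2_general (n : ℕ) (hn : 2 ≤ n) (κ : ℝ)
    (h h' h'' : ℝ → ℝ) (hh : GoodH h h' h'')
    (r r' r'' : ℝ → ℝ) (hr : RadialSol n κ h' r r' r'') :
    ∀ R ∈ Set.Ioo (0:ℝ) 1,
      HasDerivAt (fun s => (s ^ n / n) *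
            (Phi n κ h (r' s) (r s / s) - r' s * Phi1 n κ h' (r' s) (r s / s)) +
          (r s) ^ n / n * Tstress n κ h' (r' s) (r s / s))
        (R ^ (n - 1) * Phi n κ h (r' R) (r R / R)) R := by
  intro R hR
  have hRc : R ∈ Ioc (0:ℝ) 1 := Ioo_subset_Ioc_self hR
  have hnhds : Ioc (0:ℝ) 1 ∈ 𝓝 R := mem_of_superset (isOpen_Ioo.mem_nhds hR) Ioo_subset_Ioc_self
  have hr₁ : HasDerivAt r (r' R) R := (hr.hasDeriv R hRc).hasDerivAt hnhds
  have hr₂ : HasDerivAt r' (r'' R) R := (hr.hasDeriv2 R hRc).hasDerivAt hnhds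
  have hv : HasDerivAt (fun s => r s / s) ((r' R * R - r R) / R ^ 2) R :=
    (hr₁.div (hasDerivAt_id R) hR.1.ne').congr_deriv (by simp)
  have hδ : 0 < r' R * (r R / R) ^ (n - 1) :=
    mul_pos (hr.derivPos R hRc) (pow_pos (div_pos (hr.pos R hRc) hR.1) _)
  have hΦ := hasDerivAt_Phi (κ := κ) (v := fun s => r s / s) (by omega) (hh.deriv1 _ hδ) hr₂ hv
  refine (hasDerivAt_energy_flux hn hR.1.ne' hr₁ hr₂ hΦ
    ((hr.equil R hRc).hasDerivAt hnhds) rfl).congr_of_eventuallyEq ?_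
  filter_upwards [isOpen_Ioo.mem_nhds hR] with s hs
  exact energy_flux_eq (by omega) hs.1.ne' (hr.pos s (Ioo_subset_Ioc_self hs)).ne'

/-- the divergence identity
`R^{n−1} Φ(r(R)) = (d/dR)[(Rⁿ/n)(Φ(r(R)) − r'(R)Φ_{,1}(r(R))) + (r(R)ⁿ/n) T(r(R))]`
holds for any solution of the radial equilibrium equation. -/
theorem stmt2 (n : ℕ) (hn : 2 ≤ n) (κ : ℝ) (hκ : 0 < κ)
    (h h' h'' : ℝ → ℝ) (hh : GoodH h h' h'')
    (r r' r'' : ℝ → ℝ) (hr : RadialSol n κ h' r r' r'') :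
    ∀ R ∈ Set.Ioo (0:ℝ) 1,
      HasDerivAt (fun s => (s ^ n / n) *
            (Phi n κ h (r' s) (r s / s) - r' s * Phi1 n κ h' (r' s) (r s / s)) +
          (r s) ^ n / n * Tstress n κ h' (r' s) (r s / s))
        (R ^ (n - 1) * Phi n κ h (r' R) (r R / R)) R :=
  stmt2_general n hn κ h h' h'' hh r r' r'' hr

end
end

section
/- Let r ∈ C²((0,1]) ∩ C([0,1]) with r'(R) > 0 on (0,1] be a solution of the radial equilibrium equation with r(0) > 0 and with δ(R) = r'(R)(r(R)/R)^{n−1} bounded on (0,1]. Then the limits lim_{R→0⁺} ( T(r(R)) − (n−1)κ ln R ) and lim_{R→0⁺} ( T(r(R)) + (n−1)κ ln(r(R)/R) ) both exist and are finite; in particular T(r(R)) → −∞ as R → 0⁺. -/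
open Real MeasureTheory Filter Set
open scoped ENNReal NNReal

noncomputable section

/-!
Since `R^{n−1} Φ_{,1}(r(R)) = r(R)^{n−1} T(r(R))`, the equilibrium equation becomes
`T' = (n−1)κ(1 − wⁿ)/R` with `w = R r'/r`. Writing `w = δ Rⁿ/rⁿ`, the bound on `δ`
and the positive lower bound of `r` on `[0,1]` give `w ≤ C R`, so `T − (n−1)κ ln R`
has the bounded derivative `−(n−1)κ wⁿ/R` on `(0,1]`, is Lipschitz, and converges
as `R → 0⁺`. The second expression differs from it by `(n−1)κ ln r(R)`, which tends
to `(n−1)κ ln r(0)`, and `T → −∞` because `ln R → −∞`.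
-/

open scoped Topology

theorem exists_tendsto_nhdsGT_of_norm_deriv_le {f f' : ℝ → ℝ} {a b B : ℝ} (hab : a < b)
    (hf : ∀ x ∈ Ioc a b, HasDerivWithinAt f (f' x) (Ioc a b) x)
    (hB : ∀ x ∈ Ioc a b, ‖f' x‖ ≤ B) :
    ∃ L, Tendsto f (𝓝[>] a) (𝓝 L) := by
  have hlip : LipschitzOnWith B.toNNReal f (Ioc a b) :=
    (convex_Ioc a b).lipschitzOnWith_of_nnnorm_hasDerivWithin_le hf fun x hx => by
      simpa [← NNReal.coe_le_coe] using (hB x hx).trans (le_max_left B 0)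
  obtain ⟨F, hF, hFf⟩ := hlip.extend_real
  refine ⟨F a, ((hF.continuous.tendsto a).mono_left nhdsWithin_le_nhds).congr' ?_⟩
  filter_upwards [Ioc_mem_nhdsGT hab] with x hx using (hFf hx).symm

theorem pow_div_le_of_le_mul {w C R : ℝ} {n : ℕ} (hn : n ≠ 0) (hw : 0 ≤ w)
    (hwC : w ≤ C * R) (hR : R ∈ Ioc (0 : ℝ) 1) : w ^ n / R ≤ C ^ n := by
  have hC : 0 ≤ C := nonneg_of_mul_nonneg_left (hw.trans hwC) hR.1
  rw [div_le_iff₀ hR.1]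
  calc w ^ n ≤ (C * R) ^ n := by gcongr
    _ = C ^ n * R ^ n := mul_pow C R n
    _ ≤ C ^ n * R := by gcongr; exact pow_le_of_le_one hR.1.le hR.2 hn

theorem Tstress_eq_mul_Phi1_div (n : ℕ) (κ : ℝ) (h' : ℝ → ℝ) {q a R : ℝ}
    (hR : R ≠ 0) (ha : a ≠ 0) :
    Tstress n κ h' q (a / R) = R ^ (n - 1) * Phi1 n κ h' q (a / R) / a ^ (n - 1) := by
  simp only [Tstress, Phi1, div_pow]
  field_simp

theorem mul_deriv_div_le {n : ℕ} (hn : n ≠ 0) {r r' : ℝ → ℝ} {c M R : ℝ}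
    (hR : R ∈ Ioc (0 : ℝ) 1) (hr' : 0 ≤ r' R) (hc : 0 < c) (hcr : c ≤ r R)
    (hM : del n r r' R ≤ M) :
    R * r' R / r R ≤ M / c ^ n * R := by
  have hR0 : 0 < R := hR.1
  have hrR : 0 < r R := hc.trans_le hcr
  have hdel : 0 ≤ del n r r' R := by unfold del; positivity
  have hM0 : 0 ≤ M := hdel.trans hM
  calc R * r' R / r R = del n r r' R * R ^ n / r R ^ n := by
        obtain ⟨m, rfl⟩ := Nat.exists_eq_succ_of_ne_zero hn
        simp only [del, Nat.succ_sub_one, div_pow, pow_succ]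
        field_simp
    _ ≤ M * R ^ n / c ^ n := by gcongr
    _ ≤ M * R / c ^ n := by gcongr; exact pow_le_of_le_one hR.1.le hR.2 hn
    _ = M / c ^ n * R := by ring

namespace RadialSol

variable {n : ℕ} {κ : ℝ} {h' r r' r'' : ℝ → ℝ}

theorem hasDerivWithinAt_stress (hr : RadialSol n κ h' r r' r'') (hn : 2 ≤ n) {R : ℝ}
    (hR : R ∈ Ioc (0 : ℝ) 1) :
    HasDerivWithinAt (fun s => Tstress n κ h' (r' s) (r s / s))
      (((n : ℝ) - 1) * κ * (1 - (R * r' R / r R) ^ n) / R) (Ioc 0 1) R := by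
  have hrR : r R ≠ 0 := (hr.pos R hR).ne'
  have hquot := (hr.equil R hR).div ((hr.hasDeriv R hR).pow (n - 1)) (pow_ne_zero _ hrR)
  refine (hquot.congr (fun s hs => Tstress_eq_mul_Phi1_div n κ h' hs.1.ne' (hr.pos s hs).ne')
    (Tstress_eq_mul_Phi1_div n κ h' hR.1.ne' hrR)).congr_deriv ?_
  obtain ⟨k, rfl⟩ : ∃ k, n = k + 2 := ⟨n - 2, by omega⟩
  simp only [Phi1, Phi2, Nat.add_sub_cancel, show k + 2 - 1 = k + 1 from rfl, Pi.pow_apply,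
    div_pow]
  generalize h' _ = H
  have hR0 : R ≠ 0 := hR.1.ne'
  push_cast
  field_simp
  ring

theorem exists_tendsto_stress_sub_log (hr : RadialSol n κ h' r r' r'') (hn : 2 ≤ n) {c M : ℝ}
    (hc : 0 < c) (hrc : ∀ R ∈ Ioc (0 : ℝ) 1, c ≤ r R)
    (hM : ∀ R ∈ Ioc (0 : ℝ) 1, del n r r' R ≤ M) :
    ∃ L, Tendsto (fun R => Tstress n κ h' (r' R) (r R / R) - ((n : ℝ) - 1) * κ * log R)
      (𝓝[>] 0) (𝓝 L) := by
  have hn0 : n ≠ 0 := by omega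
  have hn1 : (0 : ℝ) ≤ (n : ℝ) - 1 := by
    rw [sub_nonneg, Nat.one_le_cast]; omega
  refine exists_tendsto_nhdsGT_of_norm_deriv_le zero_lt_one
    (f' := fun R => -(((n : ℝ) - 1) * κ * ((R * r' R / r R) ^ n / R)))
    (B := ((n : ℝ) - 1) * |κ| * (M / c ^ n) ^ n) (fun R hR => ?_) (fun R hR => ?_)
  · have hlog := ((hasDerivAt_log hR.1.ne').hasDerivWithinAt (s := Ioc 0 1)).const_mul
      (((n : ℝ) - 1) * κ)
    refine ((hr.hasDerivWithinAt_stress hn hR).sub hlog).congr_deriv ?_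
    field_simp
    ring
  · have hw : 0 ≤ R * r' R / r R :=
      div_nonneg (mul_nonneg hR.1.le (hr.derivPos R hR).le) (hr.pos R hR).le
    rw [norm_neg, norm_mul, norm_mul, Real.norm_of_nonneg hn1, Real.norm_eq_abs,
      Real.norm_of_nonneg (div_nonneg (pow_nonneg hw n) hR.1.le)]
    gcongr
    exact pow_div_le_of_le_mul hn0 hw
      (mul_deriv_div_le hn0 hR (hr.derivPos R hR).le hc (hrc R hR) (hM R hR)) hR

end RadialSol

theorem stmt3_general (n : ℕ) (hn : 2 ≤ n) (κ : ℝ) (hκ : 0 < κ)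
    (h' : ℝ → ℝ)
    (r r' r'' : ℝ → ℝ) (hr : RadialSol n κ h' r r' r'')
    (hcont : ContinuousOn r (Set.Icc 0 1)) (hcav : 0 < r 0)
    (hbdd : ∃ M : ℝ, ∀ R ∈ Set.Ioc (0:ℝ) 1, del n r r' R ≤ M) :
    (∃ L₁ : ℝ, Tendsto (fun R => Tstress n κ h' (r' R) (r R / R)
        - ((n:ℝ) - 1) * κ * Real.log R) (nhdsWithin 0 (Set.Ioi 0)) (nhds L₁)) ∧
    (∃ L₂ : ℝ, Tendsto (fun R => Tstress n κ h' (r' R) (r R / R)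
        + ((n:ℝ) - 1) * κ * Real.log (r R / R)) (nhdsWithin 0 (Set.Ioi 0)) (nhds L₂)) ∧
    Tendsto (fun R => Tstress n κ h' (r' R) (r R / R)) (nhdsWithin 0 (Set.Ioi 0)) atBot := by
  obtain ⟨M, hM⟩ := hbdd
  obtain ⟨c, hc, hrc⟩ := isCompact_Icc.exists_forall_le' hcont fun R hR =>
    hR.1.eq_or_lt.elim (fun h0 => h0 ▸ hcav) fun h0 => hr.pos R ⟨h0, hR.2⟩
  obtain ⟨L, hL⟩ :=
    hr.exists_tendsto_stress_sub_log hn hc (fun R hR => hrc R (Ioc_subset_Icc_self hR)) hM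
  have hlog_r : Tendsto (fun R => log (r R)) (𝓝[>] 0) (𝓝 (log (r 0))) := by
    have hr0 := (hcont 0 (left_mem_Icc.2 zero_le_one)).tendsto.mono_left
      (nhdsWithin_le_of_mem (Icc_mem_nhdsGT zero_lt_one))
    exact (continuousAt_log hcav.ne').tendsto.comp hr0
  have hcoef : 0 < ((n : ℝ) - 1) * κ := mul_pos (by rw [sub_pos, Nat.one_lt_cast]; omega) hκ
  refine ⟨⟨L, hL⟩, ⟨L + ((n : ℝ) - 1) * κ * log (r 0), ?_⟩, ?_⟩
  · refine (hL.add (hlog_r.const_mul _)).congr' ?_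
    filter_upwards [Ioc_mem_nhdsGT zero_lt_one] with R hR
    rw [log_div (hr.pos R hR).ne' hR.1.ne']
    ring
  · refine (hL.add_atBot
      ((tendsto_const_mul_atBot_of_pos hcoef).2 tendsto_log_nhdsGT_zero)).congr fun R => ?_
    ring

/-- for a cavitating solution, `T(r(R)) − (n−1)κ ln R` and
`T(r(R)) + (n−1)κ ln(r(R)/R)` have finite limits as `R → 0⁺`; in particular
`T(r(R)) → −∞`. -/
theorem stmt3 (n : ℕ) (hn : 2 ≤ n) (κ : ℝ) (hκ : 0 < κ)
    (h h' h'' : ℝ → ℝ) (hh : GoodH h h' h'')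
    (r r' r'' : ℝ → ℝ) (hr : RadialSol n κ h' r r' r'')
    (hcont : ContinuousOn r (Set.Icc 0 1)) (hcav : 0 < r 0)
    (hbdd : ∃ M : ℝ, ∀ R ∈ Set.Ioc (0:ℝ) 1, del n r r' R ≤ M) :
    (∃ L₁ : ℝ, Tendsto (fun R => Tstress n κ h' (r' R) (r R / R)
        - ((n:ℝ) - 1) * κ * Real.log R) (nhdsWithin 0 (Set.Ioi 0)) (nhds L₁)) ∧
    (∃ L₂ : ℝ, Tendsto (fun R => Tstress n κ h' (r' R) (r R / R)
        + ((n:ℝ) - 1) * κ * Real.log (r R / R)) (nhdsWithin 0 (Set.Ioi 0)) (nhds L₂)) ∧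
    Tendsto (fun R => Tstress n κ h' (r' R) (r R / R)) (nhdsWithin 0 (Set.Ioi 0)) atBot :=
  stmt3_general n hn κ hκ h' r r' r'' hr hcont hcav hbdd

end
end

section
/- Let r ∈ C²((0,1]) ∩ C([0,1]) with r'(R) > 0 on (0,1] be a solution of the radial equilibrium equation with r(0) > 0 and with δ(R) = r'(R)(r(R)/R)^{n−1} bounded on (0,1]. Then the determinant function satisfies δ(R) → 0⁺ as R → 0⁺. -/
open Real MeasureTheory Filter Set
open scoped ENNReal NNReal

noncomputable section

/-
Write `q = r'` and `v = r / R`, so that `δ = q v^(n-1)`. Since `r 0 > 0`, `v → ∞` as `R → 0⁺`,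
and the bound on `δ` then forces `q < v` near `0`. There the equilibrium equation, solved for
`δ'`, gives `δ' > 0`: up to a positive factor `δ'` equals `v^n - n q^(n-1) v + (n-1) q^n`, which is
positive by the strict weighted AM-GM inequality. Hence `δ` decreases to a limit `L ≥ 0` as
`R → 0⁺`. If `L > 0`, then `h'(δ)` stays bounded, so `Φ_{,2} ≥ (κ/2) v^(n-1)` near `0` and the
equation gives `(R^(n-1) Φ_{,1})' ≥ c / R`. Thus `R^(n-1) Φ_{,1} → -∞`, whereas
`R^(n-1) Φ_{,1} = κ (R q)^(n-1) + r^(n-1) h'(δ)` is bounded below.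
-/

open Topology

theorem tendsto_atBot_of_div_le_deriv {F F' : ℝ → ℝ} {c : ℝ} (hc : 0 < c)
    (hF : ∀ᶠ t in 𝓝[>] 0, HasDerivAt F (F' t) t ∧ c / t ≤ F' t) :
    Tendsto F (𝓝[>] 0) atBot := by
  obtain ⟨a, ha, hsub⟩ := mem_nhdsGT_iff_exists_Ioc_subset.1 hF
  have hmono : MonotoneOn (fun t => F t - c * log t) (Ioc 0 a) := by
    refine monotoneOn_of_hasDerivWithinAt_nonneg (convex_Ioc 0 a) (f' := fun t => F' t - c / t)
      (fun t ht => ?_) ?_ ?_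
    · exact ((hsub ht).1.continuousAt.sub
        (continuousAt_const.mul (continuousAt_log ht.1.ne'))).continuousWithinAt
    · rw [interior_Ioc]
      intro t ht
      rw [div_eq_mul_inv]
      exact ((hsub ⟨ht.1, ht.2.le⟩).1.fun_sub
        ((hasDerivAt_log ht.1.ne').const_mul c)).hasDerivWithinAt
    · rw [interior_Ioc]
      exact fun t ht => sub_nonneg.2 (hsub ⟨ht.1, ht.2.le⟩).2
  have hle : ∀ t ∈ Ioc 0 a, F t ≤ (F a - c * log a) + c * log t := fun t ht => by
    linarith [hmono ht (right_mem_Ioc.2 ha) ht.2]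
  refine tendsto_atBot_mono' _ ?_ (tendsto_atBot_add_const_left _ (F a - c * log a)
    (tendsto_log_nhdsGT_zero.const_mul_atBot hc))
  filter_upwards [Ioc_mem_nhdsGT ha] with t ht using hle t ht

theorem exists_tendsto_nhdsGT_of_deriv_nonneg {f : ℝ → ℝ} {a b : ℝ}
    (hf : ∀ᶠ t in 𝓝[>] a, DifferentiableAt ℝ f t ∧ 0 ≤ deriv f t)
    (hb : ∀ᶠ t in 𝓝[>] a, b ≤ f t) :
    ∃ L, Tendsto f (𝓝[>] a) (𝓝 L) ∧ ∀ᶠ t in 𝓝[>] a, L ≤ f t := by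
  obtain ⟨ε, hε, hsub⟩ := mem_nhdsGT_iff_exists_Ioo_subset.1 (hf.and hb)
  have hmono : MonotoneOn f (Ioo a ε) :=
    monotoneOn_of_deriv_nonneg (convex_Ioo a ε)
      (fun t ht => (hsub ht).1.1.continuousAt.continuousWithinAt)
      (fun t ht => (hsub (interior_subset ht)).1.1.differentiableWithinAt)
      (fun t ht => (hsub (interior_subset ht)).1.2)
  have hbdd : BddBelow (f '' Ioo a ε) := ⟨b, forall_mem_image.2 fun t ht => (hsub ht).2⟩
  refine ⟨_, hmono.tendsto_nhdsWithin_Ioo_right (nonempty_Ioo.2 hε) hbdd, ?_⟩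
  filter_upwards [Ioo_mem_nhdsGT hε] with t ht using csInf_le hbdd (mem_image_of_mem f ht)

theorem tendsto_div_atTop_of_tendsto_pos {f : ℝ → ℝ} {C : ℝ} (hf : Tendsto f (𝓝[>] 0) (𝓝 C))
    (hC : 0 < C) : Tendsto (fun x => f x / x) (𝓝[>] 0) atTop := by
  simpa [div_eq_mul_inv] using hf.pos_mul_atTop hC tendsto_inv_nhdsGT_zero

theorem mul_pow_mul_lt_pow_add_mul_pow (m : ℕ) {q v : ℝ} (hq : 0 ≤ q) (hqv : q < v) :
    (m + 2) * q ^ (m + 1) * v < v ^ (m + 2) + (m + 1) * q ^ (m + 2) := by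
  induction m with
  | zero => push_cast; nlinarith [sq_nonneg (v - q), sub_pos.2 hqv]
  | succ m ih =>
    have hv : 0 < v := hq.trans_lt hqv
    have hrec : v ^ (m + 3) + (m + 2) * q ^ (m + 3) - (m + 3) * q ^ (m + 2) * v
        = v * (v ^ (m + 2) + (m + 1) * q ^ (m + 2) - (m + 2) * q ^ (m + 1) * v)
          + (m + 2) * q ^ (m + 1) * (v - q) ^ 2 := by ring
    have hsq : 0 ≤ (m + 2) * q ^ (m + 1) * (v - q) ^ 2 := by positivity
    push_cast
    nlinarith [mul_pos hv (sub_pos.2 ih)]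

-- `q, v, q', v', a, b` stand for `r', r/R, r'', (r/R)', h'(δ), h''(δ)` at a point `R`, and `heq`
-- is the product rule applied to `R^(m+1) Φ_{,1}`, set equal to the right side of the equation.
theorem pos_of_radial_equation {m : ℕ} {κ R q v q' v' a b δ' : ℝ} (hκ : 0 < κ) (hR : 0 < R)
    (hq : 0 ≤ q) (hqv : q < v) (hb : 0 < b) (hv' : v' * R = q - v)
    (hδ' : δ' = q' * v ^ (m + 1) + (m + 1) * q * v ^ m * v')
    (heq : (m + 1) * R ^ m * (κ * q ^ (m + 1) + v ^ (m + 1) * a)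
        + R ^ (m + 1) * (κ * ((m + 1) * q ^ m * q') + (m + 1) * v ^ m * v' * a
          + v ^ (m + 1) * (b * δ'))
      = (m + 1) * R ^ m * (κ * v ^ (m + 1) + q * v ^ m * a)) :
    0 < δ' := by
  have hv : 0 < v := hq.trans_lt hqv
  have hfactor : δ' * ((κ * (m + 1) * q ^ m + v ^ (2 * m + 2) * b) * R ^ (m + 2))
      = (m + 1) * κ * R ^ (m + 1) * v ^ m
        * (v ^ (m + 2) + (m + 1) * q ^ (m + 2) - (m + 2) * q ^ (m + 1) * v) := by
    subst hδ'
    linear_combination (v ^ (m + 1) * R) * heq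
      + R ^ (m + 1) * (κ * (m + 1) ^ 2 * q ^ (m + 1) * v ^ m - (m + 1) * v ^ (2 * m + 1) * a)
        * hv'
  have hP := sub_pos.2 (mul_pow_mul_lt_pow_add_mul_pow m hq hqv)
  have hA : 0 < (κ * (m + 1) * q ^ m + v ^ (2 * m + 2) * b) * R ^ (m + 2) := by positivity
  exact pos_of_mul_pos_left (hfactor ▸ by positivity) hA.le

theorem half_mul_le_Phi2 {m : ℕ} {κ M B q v : ℝ} {h' : ℝ → ℝ} (hq : 0 ≤ q) (hv : 0 < v)
    (hM : q * v ^ (m + 1) ≤ M) (hB : |h' (q * v ^ (m + 1))| ≤ B)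
    (hMB : 2 * (M * B) ≤ κ * v ^ (m + 2)) :
    κ / 2 * v ^ (m + 1) ≤ Phi2 (m + 2) κ h' q v := by
  have hterm : -(M * B) ≤ q * v ^ (m + 1) * h' (q * v ^ (m + 1)) :=
    calc -(M * B) ≤ q * v ^ (m + 1) * -B :=
          by nlinarith [mul_le_mul_of_nonneg_right hM ((abs_nonneg _).trans hB)]
      _ ≤ q * v ^ (m + 1) * h' (q * v ^ (m + 1)) :=
          mul_le_mul_of_nonneg_left (neg_le_of_abs_le hB) (by positivity)
  refine le_of_mul_le_mul_left ?_ hv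
  simp only [Phi2, show m + 2 - 1 = m + 1 from rfl, show m + 2 - 2 = m from rfl]
  linear_combination hterm + hMB / 2

def radialForce (n : ℕ) (κ : ℝ) (h' r r' : ℝ → ℝ) (s : ℝ) : ℝ :=
  s ^ (n - 1) * Phi1 n κ h' (r' s) (r s / s)

theorem neg_mul_le_radialForce {m : ℕ} {κ B K t : ℝ} {h' r r' : ℝ → ℝ} (hκ : 0 ≤ κ) (ht : 0 < t)
    (hq : 0 ≤ r' t) (hr : 0 ≤ r t) (hrK : r t ≤ K) (hB : |h' (del (m + 2) r r' t)| ≤ B) :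
    -(K ^ (m + 1) * B) ≤ radialForce (m + 2) κ h' r r' t := by
  have hforce : radialForce (m + 2) κ h' r r' t
      = κ * (t * r' t) ^ (m + 1) + r t ^ (m + 1) * h' (del (m + 2) r r' t) := by
    simp only [radialForce, Phi1, del, show m + 2 - 1 = m + 1 from rfl]
    rw [mul_pow, div_pow]
    field_simp
  have hK : r t ^ (m + 1) * B ≤ K ^ (m + 1) * B :=
    mul_le_mul_of_nonneg_right (pow_le_pow_left₀ hr hrK _) ((abs_nonneg _).trans hB)
  have hh' : r t ^ (m + 1) * -B ≤ r t ^ (m + 1) * h' (del (m + 2) r r' t) :=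
    mul_le_mul_of_nonneg_left (neg_le_of_abs_le hB) (by positivity)
  have : 0 ≤ κ * (t * r' t) ^ (m + 1) := by positivity
  linarith

namespace RadialSol

variable {n m : ℕ} {κ M B K : ℝ} {h' h'' r r' r'' : ℝ → ℝ}

theorem del_pos (hr : RadialSol n κ h' r r' r'') {R : ℝ} (hR : R ∈ Ioc 0 1) :
    0 < del n r r' R :=
  mul_pos (hr.derivPos R hR) (pow_pos (div_pos (hr.pos R hR) hR.1) _)

theorem hasDerivAt_radialForce (hr : RadialSol n κ h' r r' r'') {R : ℝ} (hR : R ∈ Ioo 0 1) :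
    HasDerivAt (radialForce n κ h' r r')
      ((n - 1) * R ^ (n - 2) * Phi2 n κ h' (r' R) (r R / R)) R :=
  (hr.equil R ⟨hR.1, hR.2.le⟩).hasDerivAt (Ioc_mem_nhds hR.1 hR.2)

theorem hasDerivAt_div_id (hr : RadialSol n κ h' r r' r'') {R : ℝ} (hR : R ∈ Ioo 0 1) :
    HasDerivAt (fun t => r t / t) ((r' R - r R / R) / R) R := by
  refine (((hr.hasDeriv R ⟨hR.1, hR.2.le⟩).hasDerivAt (Ioc_mem_nhds hR.1 hR.2)).div
    (hasDerivAt_id R) hR.1.ne').congr_deriv ?_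
  have hR0 := hR.1.ne'
  simp only [id]
  field_simp

theorem hasDerivAt_del (hr : RadialSol (m + 2) κ h' r r' r'') {R : ℝ} (hR : R ∈ Ioo 0 1) :
    HasDerivAt (del (m + 2) r r')
      (r'' R * (r R / R) ^ (m + 1) + (m + 1) * r' R * (r R / R) ^ m * ((r' R - r R / R) / R))
      R := by
  refine (((hr.hasDeriv2 R ⟨hR.1, hR.2.le⟩).hasDerivAt (Ioc_mem_nhds hR.1 hR.2)).mul
    ((hr.hasDerivAt_div_id hR).pow (m + 1))).congr_deriv ?_
  simp only [Pi.pow_apply]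
  push_cast
  ring

theorem del_deriv_pos (hr : RadialSol (m + 2) κ h' r r' r'') (hκ : 0 < κ)
    (hh' : ∀ d, 0 < d → HasDerivAt h' (h'' d) d) (hh'' : ∀ d, 0 < d → 0 < h'' d)
    {R : ℝ} (hR : R ∈ Ioo 0 1) (hqv : r' R < r R / R) :
    0 < r'' R * (r R / R) ^ (m + 1) + (m + 1) * r' R * (r R / R) ^ m * ((r' R - r R / R) / R) := by
  have hRmem : R ∈ Ioc (0 : ℝ) 1 := ⟨hR.1, hR.2.le⟩
  have hr' := (hr.hasDeriv2 R hRmem).hasDerivAt (Ioc_mem_nhds hR.1 hR.2)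
  have hδ := hr.hasDerivAt_del hR
  have hh'δ := (hh' _ (hr.del_pos hRmem)).comp R hδ
  have hforce := ((hasDerivAt_pow (m + 1) R).mul (((hr'.pow (m + 1)).const_mul κ).add
    (((hr.hasDerivAt_div_id hR).pow (m + 1)).mul hh'δ)))
  have heq := hforce.unique (hr.hasDerivAt_radialForce hR)
  simp only [Phi2, del, Nat.add_sub_cancel, show m + 2 - 2 = m from rfl, Pi.mul_apply,
    Pi.add_apply, Pi.pow_apply, Function.comp_apply] at heq
  push_cast at heq
  refine pos_of_radial_equation (a := h' (r' R * (r R / R) ^ (m + 1)))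
    (b := h'' (r' R * (r R / R) ^ (m + 1))) hκ hR.1 (hr.derivPos R hRmem).le hqv
    (hh'' _ (hr.del_pos hRmem)) (div_mul_cancel₀ _ hR.1.ne') rfl ?_
  linear_combination heq

theorem eventually_deriv_del_nonneg (hr : RadialSol (m + 2) κ h' r r' r'') (hκ : 0 < κ)
    (hh' : ∀ d, 0 < d → HasDerivAt h' (h'' d) d) (hh'' : ∀ d, 0 < d → 0 < h'' d)
    (hM : ∀ R ∈ Ioc (0 : ℝ) 1, del (m + 2) r r' R ≤ M)
    (hv : Tendsto (fun R => r R / R) (𝓝[>] 0) atTop) :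
    ∀ᶠ R in 𝓝[>] 0, DifferentiableAt ℝ (del (m + 2) r r') R ∧ 0 ≤ deriv (del (m + 2) r r') R := by
  filter_upwards [Ioo_mem_nhdsGT one_pos, hv.eventually (eventually_gt_atTop (max 1 M))]
    with R hR hvR
  have hRmem : R ∈ Ioc (0 : ℝ) 1 := ⟨hR.1, hR.2.le⟩
  have hv1 : 1 < r R / R := (le_max_left _ _).trans_lt hvR
  have hqv : r' R < r R / R := by
    have hδ : r' R * (r R / R) ≤ M :=
      (mul_le_mul_of_nonneg_left (le_self_pow₀ hv1.le (by omega)) (hr.derivPos R hRmem).le).trans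
        (hM R hRmem)
    nlinarith [le_max_right 1 M]
  have hD := hr.hasDerivAt_del hR
  exact ⟨hD.differentiableAt, hD.deriv ▸ (hr.del_deriv_pos hκ hh' hh'' hR hqv).le⟩

theorem tendsto_radialForce_atBot (hr : RadialSol (m + 2) κ h' r r' r'') (hκ : 0 < κ)
    (hM : ∀ R ∈ Ioc (0 : ℝ) 1, del (m + 2) r r' R ≤ M)
    (hr0 : Tendsto r (𝓝[>] 0) (𝓝 (r 0))) (hcav : 0 < r 0)
    (hB : ∀ᶠ R in 𝓝[>] 0, |h' (del (m + 2) r r' R)| ≤ B) :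
    Tendsto (radialForce (m + 2) κ h' r r') (𝓝[>] 0) atBot := by
  refine tendsto_atBot_of_div_le_deriv (c := (m + 1) * (κ / 2) * (r 0 / 2) ^ (m + 1))
    (F' := fun t => ((m + 2 : ℕ) - 1) * t ^ (m + 2 - 2) * Phi2 (m + 2) κ h' (r' t) (r t / t))
    (by positivity) ?_
  filter_upwards [Ioo_mem_nhdsGT one_pos, hB,
    hr0.eventually (eventually_gt_nhds (half_lt_self hcav)),
    (tendsto_div_atTop_of_tendsto_pos hr0 hcav).eventually
      (eventually_ge_atTop (max 1 (2 * (M * B) / κ)))] with t ht htB htr htv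
  refine ⟨hr.hasDerivAt_radialForce ht, ?_⟩
  have hRmem : t ∈ Ioc (0 : ℝ) 1 := ⟨ht.1, ht.2.le⟩
  have hv1 : 1 ≤ r t / t := (le_max_left _ _).trans htv
  have hMB : 2 * (M * B) ≤ κ * (r t / t) ^ (m + 2) := by
    rw [← div_le_iff₀' hκ]
    exact (le_max_right _ _).trans (htv.trans (le_self_pow₀ hv1 (by omega)))
  have hPhi2 := half_mul_le_Phi2 (hr.derivPos t hRmem).le (div_pos (hr.pos t hRmem) ht.1)
    (hM t hRmem) htB hMB
  have ht0 := ht.1.ne'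
  rw [show ((m + 2 : ℕ) : ℝ) - 1 = m + 1 by push_cast; ring, Nat.add_sub_cancel]
  calc (m + 1) * (κ / 2) * (r 0 / 2) ^ (m + 1) / t
      ≤ (m + 1) * (κ / 2) * r t ^ (m + 1) / t :=
        div_le_div_of_nonneg_right (by gcongr) ht.1.le
    _ = (m + 1) * t ^ m * (κ / 2 * (r t / t) ^ (m + 1)) := by
        rw [div_pow]
        field_simp
        ring
    _ ≤ (m + 1) * t ^ m * Phi2 (m + 2) κ h' (r' t) (r t / t) :=
        mul_le_mul_of_nonneg_left hPhi2 (mul_nonneg (by positivity) (pow_nonneg ht.1.le m))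

theorem eventually_neg_le_radialForce (hr : RadialSol (m + 2) κ h' r r' r'') (hκ : 0 < κ)
    (hK : ∀ x ∈ Icc (0 : ℝ) 1, ‖r x‖ ≤ K)
    (hB : ∀ᶠ R in 𝓝[>] 0, |h' (del (m + 2) r r' R)| ≤ B) :
    ∀ᶠ R in 𝓝[>] 0, -(K ^ (m + 1) * B) ≤ radialForce (m + 2) κ h' r r' R := by
  filter_upwards [Ioc_mem_nhdsGT one_pos, hB] with R hR hRB
  exact neg_mul_le_radialForce hκ.le hR.1 (hr.derivPos R hR).le (hr.pos R hR).le
    ((le_abs_self _).trans (hK R (Ioc_subset_Icc_self hR))) hRB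

end RadialSol

/-- for a cavitating solution the determinant function satisfies
`δ(R) → 0⁺` as `R → 0⁺`. -/
theorem stmt4 (n : ℕ) (hn : 2 ≤ n) (κ : ℝ) (hκ : 0 < κ)
    (h h' h'' : ℝ → ℝ) (hh : GoodH h h' h'')
    (r r' r'' : ℝ → ℝ) (hr : RadialSol n κ h' r r' r'')
    (hcont : ContinuousOn r (Set.Icc 0 1)) (hcav : 0 < r 0)
    (hbdd : ∃ M : ℝ, ∀ R ∈ Set.Ioc (0:ℝ) 1, del n r r' R ≤ M) :
    Tendsto (fun R => del n r r' R) (nhdsWithin 0 (Set.Ioi 0)) (nhds 0) ∧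
    ∀ R ∈ Set.Ioc (0:ℝ) 1, 0 < del n r r' R := by
  obtain ⟨m, rfl⟩ : ∃ m, n = m + 2 := ⟨n - 2, by omega⟩
  refine ⟨?_, fun R hR => hr.del_pos hR⟩
  obtain ⟨M, hM⟩ := hbdd
  have hδ : ∀ᶠ R in 𝓝[>] 0, 0 ≤ del (m + 2) r r' R := by
    filter_upwards [Ioc_mem_nhdsGT one_pos] with R hR using (hr.del_pos hR).le
  have hr0 : Tendsto r (𝓝[>] 0) (𝓝 (r 0)) :=
    ((hcont 0 ⟨le_rfl, zero_le_one⟩).mono_of_mem_nhdsWithin (Icc_mem_nhdsGT one_pos)).tendsto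
  have hv := tendsto_div_atTop_of_tendsto_pos hr0 hcav
  obtain ⟨L, hL, hLδ⟩ := exists_tendsto_nhdsGT_of_deriv_nonneg
    (hr.eventually_deriv_del_nonneg hκ hh.deriv2 hh.hpp_pos hM hv) hδ
  obtain rfl | hL0 := (ge_of_tendsto hL hδ).eq_or_lt
  · exact hL
  obtain ⟨B, hB⟩ := isCompact_Icc.exists_bound_of_continuousOn (s := Icc L M) (f := h')
    fun d hd => (hh.deriv2 d (hL0.trans_le hd.1)).continuousAt.continuousWithinAt
  have hBδ : ∀ᶠ R in 𝓝[>] 0, |h' (del (m + 2) r r' R)| ≤ B := by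
    filter_upwards [hLδ, Ioc_mem_nhdsGT one_pos] with R hLR hR using hB _ ⟨hLR, hM R hR⟩
  obtain ⟨K, hK⟩ := isCompact_Icc.exists_bound_of_continuousOn hcont
  obtain ⟨R, hbot, hbelow⟩ := (((hr.tendsto_radialForce_atBot hκ hM hr0 hcav hBδ).eventually
    (eventually_lt_atBot _)).and (hr.eventually_neg_le_radialForce hκ hK hBδ)).exists
  exact (hbot.not_ge hbelow).elim
end
end

section
/- Assume in addition that there exist γ > 0, d₀ > 0 and constants 0 < K₁ ≤ K₂ such that K₁/d^{γ+2} ≤ h''(d) ≤ K₂/d^{γ+2} for all 0 < d ≤ d₀. Let r be a cavitating solution (r ∈ C²((0,1]) ∩ C([0,1]), r' > 0 on (0,1], solving the radial equilibrium equation, r(0) > 0, δ bounded). Then there exist constants C₁ > 0, C₃ > 0, C₂, C₄ ∈ ℝ and R₀ ∈ (0,1) such that for all 0 < R ≤ R₀: C₁ ln(r(R)/R) + C₂ ≤ δ(R)^{−(γ+1)} ≤ C₃ ln(r(R)/R) + C₄. -/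
open Real MeasureTheory Filter Set
open scoped ENNReal NNReal

noncomputable section

/-!
Write `v = r/R`, `q = r'/v` and `T = κ q^{n-1} + h'(δ)` for the radial Cauchy stress. The
equilibrium equation is equivalent to `T' = (n-1) κ (1 - qⁿ) / R`. Since `r(0) > 0`, `v → ∞` as
`R → 0`, and as `δ = q vⁿ` is bounded, `q → 0`; hence `T'` is comparable to `1/R` and `-T` to
`-ln R`. The term `κ q^{n-1}` is bounded, so `-h'(δ)` is comparable to `-ln R` as well; in
particular `h'(δ) → -∞`, which forces `δ ≤ d₀` near `0`. There, integrating the bounds on `h''`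
makes `δ^{-(γ+1)}` comparable to `-h'(δ)`. Finally `ln(r/R) = ln r - ln R` with `ln r → ln r(0)`.
-/

open Topology

theorem sub_le_sub_of_hasDerivAt_le {f g f' g' : ℝ → ℝ} {a b : ℝ} (hab : a ≤ b)
    (hf : ContinuousOn f (Icc a b)) (hg : ContinuousOn g (Icc a b))
    (hf' : ∀ x ∈ Ioo a b, HasDerivAt f (f' x) x) (hg' : ∀ x ∈ Ioo a b, HasDerivAt g (g' x) x)
    (hle : ∀ x ∈ Ioo a b, f' x ≤ g' x) : f b - f a ≤ g b - g a := by
  have hmono : MonotoneOn (fun x => g x - f x) (Icc a b) := by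
    refine monotoneOn_of_hasDerivWithinAt_nonneg (f' := fun x => g' x - f' x) (convex_Icc a b)
      (hg.sub hf) (fun x hx => ?_) (fun x hx => ?_) <;> rw [interior_Icc] at hx
    · exact ((hg' x hx).sub (hf' x hx)).hasDerivWithinAt
    · exact sub_nonneg.2 (hle x hx)
  linarith [hmono (left_mem_Icc.2 hab) (right_mem_Icc.2 hab) hab]

theorem hasDerivAt_mul_rpow_neg {γ K x : ℝ} (hγ : γ + 1 ≠ 0) (hx : 0 < x) :
    HasDerivAt (fun y => -K / (γ + 1) * y ^ (-(γ + 1))) (K / x ^ (γ + 2)) x := by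
  refine ((Real.hasDerivAt_rpow_const (Or.inl hx.ne')).const_mul (-K / (γ + 1))).congr_deriv ?_
  rw [show -(γ + 1) - 1 = -(γ + 2) by ring, Real.rpow_neg hx.le]
  field_simp

theorem rpow_neg_bounds_of_deriv_bounds {g g' : ℝ → ℝ} {γ d₀ K₁ K₂ d : ℝ} (hγ : γ + 1 ≠ 0)
    (hg : ∀ x ∈ Ioc 0 d₀, HasDerivAt g (g' x) x)
    (hbound : ∀ x, 0 < x → x ≤ d₀ → K₁ / x ^ (γ + 2) ≤ g' x ∧ g' x ≤ K₂ / x ^ (γ + 2))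
    (hd : d ∈ Ioc 0 d₀) :
    K₁ / (γ + 1) * (d ^ (-(γ + 1)) - d₀ ^ (-(γ + 1))) ≤ g d₀ - g d ∧
      g d₀ - g d ≤ K₂ / (γ + 1) * (d ^ (-(γ + 1)) - d₀ ^ (-(γ + 1))) := by
  have hsub : Icc d d₀ ⊆ Ioc 0 d₀ := Icc_subset_Ioc_iff hd.2 |>.2 ⟨hd.1, le_rfl⟩
  have hgc : ContinuousOn g (Icc d d₀) := fun x hx =>
    (hg x (hsub hx)).continuousAt.continuousWithinAt
  have hP : ∀ K, ∀ x ∈ Icc d d₀, HasDerivAt (fun y => -K / (γ + 1) * y ^ (-(γ + 1)))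
      (K / x ^ (γ + 2)) x := fun K x hx => hasDerivAt_mul_rpow_neg hγ (hsub hx).1
  have hPc : ∀ K, ContinuousOn (fun y => -K / (γ + 1) * y ^ (-(γ + 1))) (Icc d d₀) :=
    fun K x hx => (hP K x hx).continuousAt.continuousWithinAt
  have hg' : ∀ x ∈ Ioo d d₀, HasDerivAt g (g' x) x := fun x hx => hg x (hsub (Ioo_subset_Icc_self hx))
  have hP' : ∀ K, ∀ x ∈ Ioo d d₀, HasDerivAt (fun y => -K / (γ + 1) * y ^ (-(γ + 1)))
      (K / x ^ (γ + 2)) x := fun K x hx => hP K x (Ioo_subset_Icc_self hx)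
  have hlo := sub_le_sub_of_hasDerivAt_le hd.2 (hPc K₁) hgc (hP' K₁) hg'
    fun x hx => (hbound x (hd.1.trans hx.1) hx.2.le).1
  have hup := sub_le_sub_of_hasDerivAt_le hd.2 hgc (hPc K₂) hg' (hP' K₂)
    fun x hx => (hbound x (hd.1.trans hx.1) hx.2.le).2
  have hP_sub : ∀ K, -K / (γ + 1) * d₀ ^ (-(γ + 1)) - -K / (γ + 1) * d ^ (-(γ + 1)) =
      K / (γ + 1) * (d ^ (-(γ + 1)) - d₀ ^ (-(γ + 1))) := fun K => by ring
  rw [hP_sub] at hlo hup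
  exact ⟨hlo, hup⟩

def AffinelyBounded {α : Type*} (l : Filter α) (f g : α → ℝ) : Prop :=
  ∃ c₁ a₁ c₂ a₂ : ℝ, 0 < c₁ ∧ 0 < c₂ ∧ ∀ᶠ x in l, c₁ * g x + a₁ ≤ f x ∧ f x ≤ c₂ * g x + a₂

namespace AffinelyBounded

variable {α : Type*} {l : Filter α} {f g k : α → ℝ}

theorem trans (hfg : AffinelyBounded l f g) (hgk : AffinelyBounded l g k) :
    AffinelyBounded l f k := by
  obtain ⟨c₁, a₁, c₂, a₂, hc₁, hc₂, hfg⟩ := hfg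
  obtain ⟨e₁, b₁, e₂, b₂, he₁, he₂, hgk⟩ := hgk
  refine ⟨c₁ * e₁, c₁ * b₁ + a₁, c₂ * e₂, c₂ * b₂ + a₂, by positivity, by positivity, ?_⟩
  filter_upwards [hfg, hgk] with x ⟨hf₁, hf₂⟩ ⟨hg₁, hg₂⟩
  constructor <;> nlinarith

theorem of_bounded_sub {a b : ℝ} (h : ∀ᶠ x in l, f x - g x ∈ Icc a b) : AffinelyBounded l f g :=
  ⟨1, a, 1, b, one_pos, one_pos, h.mono fun x hx => by constructor <;> linarith [hx.1, hx.2]⟩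

theorem tendsto_atTop (hfg : AffinelyBounded l f g) (hg : Tendsto g l atTop) :
    Tendsto f l atTop := by
  obtain ⟨c₁, a₁, _, _, hc₁, _, hfg⟩ := hfg
  exact tendsto_atTop_mono' l (hfg.mono fun x hx => hx.1)
    (tendsto_atTop_add_const_right l a₁ (hg.const_mul_atTop hc₁))

end AffinelyBounded

theorem exists_mem_Ioo_forall_Ioc_of_eventually_nhdsGT {p : ℝ → Prop}
    (hp : ∀ᶠ x in 𝓝[>] 0, p x) : ∃ R₀ ∈ Ioo (0 : ℝ) 1, ∀ x ∈ Ioc 0 R₀, p x := by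
  obtain ⟨u, hu, hsub⟩ := mem_nhdsGT_iff_exists_Ioc_subset.1 hp
  exact ⟨min u (1 / 2), ⟨lt_min hu (by norm_num), (min_le_right _ _).trans_lt (by norm_num)⟩,
    fun x hx => hsub ⟨hx.1, hx.2.trans (min_le_left _ _)⟩⟩

theorem affinelyBounded_neg_neg_log_of_deriv {f f' : ℝ → ℝ} {c₁ c₂ : ℝ} (hc₁ : 0 < c₁)
    (hc₂ : 0 < c₂) (hf : ∀ᶠ x in 𝓝[>] 0, HasDerivAt f (f' x) x ∧ c₁ / x ≤ f' x ∧ f' x ≤ c₂ / x) :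
    AffinelyBounded (𝓝[>] 0) (fun x => -f x) (fun x => -log x) := by
  obtain ⟨a, ha, hsub⟩ := mem_nhdsGT_iff_exists_Ioc_subset.1 hf
  refine ⟨c₁, c₁ * log a - f a, c₂, c₂ * log a - f a, hc₁, hc₂, ?_⟩
  filter_upwards [Ioc_mem_nhdsGT ha] with R hR
  have hIcc : Icc R a ⊆ Ioc 0 a := Icc_subset_Ioc_iff hR.2 |>.2 ⟨hR.1, le_rfl⟩
  have hIoo : Ioo R a ⊆ Ioc 0 a := Ioo_subset_Icc_self.trans hIcc
  have hfc : ContinuousOn f (Icc R a) := fun x hx =>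
    (hsub (hIcc hx)).1.continuousAt.continuousWithinAt
  have hlog : ∀ c, ∀ x ∈ Ioo R a, HasDerivAt (fun y => c * log y) (c / x) x := fun c x hx => by
    simpa [div_eq_mul_inv] using (Real.hasDerivAt_log (hIoo hx).1.ne').const_mul c
  have hlogc : ∀ c, ContinuousOn (fun y => c * log y) (Icc R a) := fun c =>
    continuousOn_const.mul (Real.continuousOn_log.mono fun x hx => (hIcc hx).1.ne')
  have hlo := sub_le_sub_of_hasDerivAt_le hR.2 (hlogc c₁) hfc (hlog c₁)
    (fun x hx => (hsub (hIoo hx)).1) fun x hx => (hsub (hIoo hx)).2.1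
  have hup := sub_le_sub_of_hasDerivAt_le hR.2 hfc (hlogc c₂) (fun x hx => (hsub (hIoo hx)).1)
    (hlog c₂) fun x hx => (hsub (hIoo hx)).2.2
  constructor <;> linarith

theorem affinelyBounded_rpow_neg_of_deriv_bounds {α : Type*} {l : Filter α} {δ : α → ℝ}
    {g g' : ℝ → ℝ} {γ d₀ K₁ K₂ : ℝ} (hγ : 0 < γ + 1) (hK₁ : 0 < K₁) (hK₂ : 0 < K₂)
    (hg : ∀ x ∈ Ioc 0 d₀, HasDerivAt g (g' x) x)
    (hbound : ∀ x, 0 < x → x ≤ d₀ → K₁ / x ^ (γ + 2) ≤ g' x ∧ g' x ≤ K₂ / x ^ (γ + 2))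
    (hδ : ∀ᶠ x in l, δ x ∈ Ioc 0 d₀) :
    AffinelyBounded l (fun x => δ x ^ (-(γ + 1))) (fun x => -g (δ x)) := by
  refine ⟨(γ + 1) / K₂, d₀ ^ (-(γ + 1)) + (γ + 1) / K₂ * g d₀, (γ + 1) / K₁,
    d₀ ^ (-(γ + 1)) + (γ + 1) / K₁ * g d₀, by positivity, by positivity, ?_⟩
  filter_upwards [hδ] with x hx
  obtain ⟨hlo, hup⟩ := rpow_neg_bounds_of_deriv_bounds hγ.ne' hg hbound hx
  have hcancel : ∀ K, 0 < K → (γ + 1) / K * (K / (γ + 1) * (δ x ^ (-(γ + 1)) - d₀ ^ (-(γ + 1))))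
      = δ x ^ (-(γ + 1)) - d₀ ^ (-(γ + 1)) := fun K hK => by field_simp
  have hlo' := mul_le_mul_of_nonneg_left hlo (by positivity : 0 ≤ (γ + 1) / K₁)
  have hup' := mul_le_mul_of_nonneg_left hup (by positivity : 0 ≤ (γ + 1) / K₂)
  rw [hcancel K₁ hK₁] at hlo'
  rw [hcancel K₂ hK₂] at hup'
  constructor <;> linarith

theorem eventually_mem_Ioc_of_tendsto_neg_atTop {α : Type*} {l : Filter α} {δ : α → ℝ}
    {g : ℝ → ℝ} {d₀ : ℝ} (hg : MonotoneOn g (Ioi 0)) (hd₀ : 0 < d₀) (hδ : ∀ᶠ x in l, 0 < δ x)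
    (hgδ : Tendsto (fun x => -g (δ x)) l atTop) : ∀ᶠ x in l, δ x ∈ Ioc 0 d₀ := by
  filter_upwards [hδ, hgδ.eventually_gt_atTop (-g d₀)] with x hpos hlt
  refine ⟨hpos, not_lt.1 fun hgt => ?_⟩
  linarith [hg (mem_Ioi.2 hd₀) (mem_Ioi.2 hpos) hgt.le]

theorem affinelyBounded_neg_log_log_div {r : ℝ → ℝ} {ρ : ℝ} (hr : Tendsto r (𝓝[>] 0) (𝓝 ρ))
    (hρ : 0 < ρ) : AffinelyBounded (𝓝[>] 0) (fun R => -log R) (fun R => log (r R / R)) := by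
  have hlog : Tendsto (fun R => log (r R)) (𝓝[>] 0) (𝓝 (log ρ)) :=
    (Real.continuousAt_log hρ.ne').tendsto.comp hr
  refine AffinelyBounded.of_bounded_sub (a := -(log ρ + 1)) (b := -(log ρ - 1)) ?_
  filter_upwards [self_mem_nhdsWithin, hr.eventually (lt_mem_nhds hρ),
    hlog.eventually (Icc_mem_nhds (sub_one_lt _) (lt_add_one _))] with R hR hrR hlogR
  rw [Real.log_div hrR.ne' (ne_of_gt hR)]
  constructor <;> linarith [hlogR.1, hlogR.2]

theorem GoodH.monotoneOn_deriv {h h' h'' : ℝ → ℝ} (hh : GoodH h h' h'') :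
    MonotoneOn h' (Ioi 0) := by
  refine monotoneOn_of_hasDerivWithinAt_nonneg (f' := h'') (convex_Ioi 0)
    (fun x hx => (hh.deriv2 x hx).continuousAt.continuousWithinAt) (fun x hx => ?_)
    (fun x hx => ?_) <;> rw [interior_Ioi] at hx
  · exact (hh.deriv2 x hx).hasDerivWithinAt
  · exact (hh.hpp_pos x hx).le

section RadialSolution

variable {n : ℕ} {κ : ℝ} {h' r r' r'' : ℝ → ℝ}

theorem Tstress_eq_div_pow {m : ℕ} {s ρ : ℝ} (q : ℝ) (hs : s ≠ 0) (hρ : ρ ≠ 0) :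
    Tstress (m + 2) κ h' q (ρ / s) = s ^ (m + 1) * Phi1 (m + 2) κ h' q (ρ / s) / ρ ^ (m + 1) := by
  simp only [Tstress, Phi1, show m + 2 - 1 = m + 1 from rfl]
  generalize h' (q * (ρ / s) ^ (m + 1)) = H
  simp only [div_pow]
  field_simp

theorem RadialSol.hasDerivWithinAt_stress_s6 (hn : 2 ≤ n) (hr : RadialSol n κ h' r r' r'')
    {R : ℝ} (hR : R ∈ Ioc (0 : ℝ) 1) :
    HasDerivWithinAt (fun s => Tstress n κ h' (r' s) (r s / s))
      ((n - 1) * κ / R * (1 - (r' R / (r R / R)) ^ n)) (Ioc 0 1) R := by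
  obtain ⟨m, rfl⟩ : ∃ m, n = m + 2 := ⟨n - 2, by omega⟩
  have hrR := (hr.pos R hR).ne'
  have hquot := (hr.equil R hR).div ((hr.hasDeriv R hR).pow (m + 1)) (pow_ne_zero _ hrR)
  refine (hquot.congr (fun s hs => ?_) ?_).congr_deriv ?_
  · simpa using Tstress_eq_div_pow (r' s) hs.1.ne' (hr.pos s hs).ne'
  · simpa using Tstress_eq_div_pow (r' R) hR.1.ne' hrR
  · have hR0 := hR.1.ne'
    simp only [Phi1, Phi2, Pi.pow_apply, show m + 2 - 1 = m + 1 from rfl,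
      show m + 2 - 2 = m from rfl, Nat.add_sub_cancel, Nat.cast_add, Nat.cast_ofNat, Nat.cast_one]
    generalize h' (r' R * (r R / R) ^ (m + 1)) = H
    simp only [div_pow]
    field_simp
    ring

theorem RadialSol.del_pos_s6 (hr : RadialSol n κ h' r r' r'') {R : ℝ} (hR : R ∈ Ioc (0 : ℝ) 1) :
    0 < del n r r' R :=
  mul_pos (hr.derivPos R hR) (pow_pos (div_pos (hr.pos R hR) hR.1) _)

theorem RadialSol.tendsto_ratio (hn : n ≠ 0) (hr : RadialSol n κ h' r r' r'') {ρ M : ℝ}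
    (hr0 : Tendsto r (𝓝[>] 0) (𝓝 ρ)) (hρ : 0 < ρ) (hM : ∀ᶠ R in 𝓝[>] 0, del n r r' R ≤ M) :
    Tendsto (fun R => r' R / (r R / R)) (𝓝[>] 0) (𝓝[>] 0) := by
  have hv : Tendsto (fun R => r R / R) (𝓝[>] 0) atTop := by
    simpa only [div_eq_mul_inv] using hr0.pos_mul_atTop hρ tendsto_inv_nhdsGT_zero
  have hI : Ioc (0 : ℝ) 1 ∈ 𝓝[>] 0 := Ioc_mem_nhdsGT one_pos
  have hpos : ∀ᶠ R in 𝓝[>] 0, 0 < r' R / (r R / R) := by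
    filter_upwards [hI] with R hR
    exact div_pos (hr.derivPos R hR) (div_pos (hr.pos R hR) hR.1)
  have hbound : Tendsto (fun R => M / (r R / R) ^ n) (𝓝[>] 0) (𝓝 0) :=
    tendsto_const_nhds.div_atTop ((tendsto_pow_atTop hn).comp hv)
  refine tendsto_nhdsWithin_iff.2 ⟨tendsto_of_tendsto_of_tendsto_of_le_of_le' tendsto_const_nhds
    hbound (hpos.mono fun _ => le_of_lt) ?_, hpos⟩
  filter_upwards [hI, hM] with R hR hMR
  have hvR : 0 < r R / R := div_pos (hr.pos R hR) hR.1
  obtain ⟨k, rfl⟩ := Nat.exists_eq_succ_of_ne_zero hn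
  calc r' R / (r R / R) = del (k + 1) r r' R / (r R / R) ^ (k + 1) := by
        simp only [del, Nat.add_sub_cancel, pow_succ]
        field_simp
    _ ≤ M / (r R / R) ^ (k + 1) := by gcongr

theorem RadialSol.affinelyBounded_neg_stress (hn : 2 ≤ n) (hκ : 0 < κ)
    (hr : RadialSol n κ h' r r' r'')
    (hq : Tendsto (fun R => r' R / (r R / R)) (𝓝[>] 0) (𝓝[>] 0)) :
    AffinelyBounded (𝓝[>] 0) (fun R => -Tstress n κ h' (r' R) (r R / R)) (fun R => -log R) := by
  have hn1 : (0 : ℝ) < n - 1 := by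
    have : (2 : ℝ) ≤ n := by exact_mod_cast hn
    linarith
  refine affinelyBounded_neg_neg_log_of_deriv (c₁ := (n - 1) * κ / 2) (c₂ := (n - 1) * κ)
    (f' := fun R => (n - 1) * κ / R * (1 - (r' R / (r R / R)) ^ n))
    (by positivity) (by positivity) ?_
  filter_upwards [Ioo_mem_nhdsGT one_pos, hq (Ioo_mem_nhdsGT (by norm_num : (0 : ℝ) < 1 / 2))]
    with R hR hqR
  set q := r' R / (r R / R)
  obtain ⟨hq0, hq2⟩ : 0 < q ∧ q < 1 / 2 := hqR
  have hqn : q ^ n ≤ 1 / 2 :=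
    (pow_le_of_le_one hq0.le (by linarith) (by omega)).trans hq2.le
  have hc : 0 ≤ (n - 1) * κ / R := by have := hR.1; positivity
  refine ⟨(hr.hasDerivWithinAt_stress_s6 hn (Ioo_subset_Ioc_self hR)).hasDerivAt
    (Ioc_mem_nhds hR.1 hR.2), ?_, ?_⟩
  · calc (n - 1) * κ / 2 / R = (n - 1) * κ / R * (1 / 2) := by ring
      _ ≤ _ := mul_le_mul_of_nonneg_left (by linarith) hc
  · calc (n - 1) * κ / R * (1 - q ^ n) ≤ (n - 1) * κ / R * 1 :=
          mul_le_mul_of_nonneg_left (by linarith [pow_pos hq0 n]) hc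
      _ = (n - 1) * κ / R := mul_one _

theorem affinelyBounded_neg_deriv_del_neg_stress (hκ : 0 ≤ κ)
    (hq : Tendsto (fun R => r' R / (r R / R)) (𝓝[>] 0) (𝓝[>] 0)) :
    AffinelyBounded (𝓝[>] 0) (fun R => -h' (del n r r' R))
      (fun R => -Tstress n κ h' (r' R) (r R / R)) := by
  refine AffinelyBounded.of_bounded_sub (a := 0) (b := κ) ?_
  filter_upwards [hq (Ioo_mem_nhdsGT one_pos)] with R hqR
  have hstress : Tstress n κ h' (r' R) (r R / R) =
      κ * (r' R / (r R / R)) ^ (n - 1) + h' (del n r r' R) := rfl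
  have hqpow : (r' R / (r R / R)) ^ (n - 1) ≤ 1 := pow_le_one₀ hqR.1.le hqR.2.le
  rw [hstress, neg_sub_neg, add_sub_cancel_right]
  exact ⟨mul_nonneg hκ (pow_nonneg hqR.1.le _), mul_le_of_le_one_right hκ hqpow⟩

end RadialSolution

/-- under power-law bounds on `h''` near `0`, for a cavitating solution
`δ(R)^{−(γ+1)}` is trapped between two affine functions of `ln(r(R)/R)` near `R = 0`. -/
theorem stmt6 (n : ℕ) (hn : 2 ≤ n) (κ : ℝ) (hκ : 0 < κ)
    (h h' h'' : ℝ → ℝ) (hh : GoodH h h' h'')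
    (r r' r'' : ℝ → ℝ) (hr : RadialSol n κ h' r r' r'')
    (γ d₀ K₁ K₂ : ℝ) (hγ : 0 < γ) (hd₀ : 0 < d₀) (hK₁ : 0 < K₁) (hK₁₂ : K₁ ≤ K₂)
    (hpp_bound : ∀ d : ℝ, 0 < d → d ≤ d₀ →
      K₁ / d ^ (γ + 2) ≤ h'' d ∧ h'' d ≤ K₂ / d ^ (γ + 2))
    (hcont : ContinuousOn r (Set.Icc 0 1)) (hcav : 0 < r 0)
    (hbdd : ∃ M : ℝ, ∀ R ∈ Set.Ioc (0:ℝ) 1, del n r r' R ≤ M) :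
    ∃ C₁ C₂ C₃ C₄ R₀ : ℝ, 0 < C₁ ∧ 0 < C₃ ∧ R₀ ∈ Set.Ioo (0:ℝ) 1 ∧
      ∀ R ∈ Set.Ioc (0:ℝ) R₀,
        C₁ * Real.log (r R / R) + C₂ ≤ (del n r r' R) ^ (-(γ + 1)) ∧
        (del n r r' R) ^ (-(γ + 1)) ≤ C₃ * Real.log (r R / R) + C₄ := by
  have hI : Ioc (0 : ℝ) 1 ∈ 𝓝[>] 0 := Ioc_mem_nhdsGT one_pos
  have hr0 : Tendsto r (𝓝[>] 0) (𝓝 (r 0)) :=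
    (hcont 0 ⟨le_rfl, zero_le_one⟩).mono_of_mem_nhdsWithin
      (mem_of_superset hI Ioc_subset_Icc_self)
  obtain ⟨M, hM⟩ := hbdd
  have hq := hr.tendsto_ratio (by omega) hr0 hcav (mem_of_superset hI hM)
  have hh'δ := (affinelyBounded_neg_deriv_del_neg_stress hκ.le hq).trans
    (hr.affinelyBounded_neg_stress hn hκ hq)
  have hδ : ∀ᶠ R in 𝓝[>] 0, del n r r' R ∈ Ioc 0 d₀ :=
    eventually_mem_Ioc_of_tendsto_neg_atTop hh.monotoneOn_deriv hd₀
      (mem_of_superset hI fun R hR => hr.del_pos_s6 hR)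
      (hh'δ.tendsto_atTop (tendsto_neg_atBot_atTop.comp Real.tendsto_log_nhdsGT_zero))
  obtain ⟨C₁, C₂, C₃, C₄, hC₁, hC₃, hbounds⟩ :=
    ((affinelyBounded_rpow_neg_of_deriv_bounds (by linarith) hK₁ (hK₁.trans_le hK₁₂)
      (fun x hx => hh.deriv2 x hx.1) hpp_bound hδ).trans hh'δ).trans
      (affinelyBounded_neg_log_log_div hr0 hcav)
  obtain ⟨R₀, hR₀, hR₀_bounds⟩ := exists_mem_Ioo_forall_Ioc_of_eventually_nhdsGT hbounds
  exact ⟨C₁, C₂, C₃, C₄, R₀, hC₁, hC₃, hR₀, hR₀_bounds⟩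

end
end

section
/- Let r : [ε,1] → (0,∞) be C¹ with r'(R) > 0 and r(1) = λ, where 0 < ε < 1. Then the following null-Lagrangian identity holds: ∫_ε¹ R^{n−1} Φ(r'(R), r(R)/R, …, r(R)/R) dR − (κ(n−1)/n) r(ε)ⁿ ln(r(ε)/ε) = ∫_ε¹ R^{n−1} [ (κ/n)(r'(R))ⁿ + h(δ(R)) + κ(n−1) δ(R) (1/n + ln(r(R)/R)) ] dR − (κ(n−1)/n) λⁿ ln λ, where δ(R) = r'(R)(r(R)/R)^{n−1}. -/
/-! The `h`-terms of the two integrands agree, and what remains of their difference is the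
total derivative `d/dR Ψ(r(R), R)` of `Ψ(ρ, R) = κ(n−1)/n · ρⁿ log(ρ/R)`: with `v = r/R`
one has `R^{n−1} δ = r' r^{n−1}` and `R^{n−1} vⁿ = rⁿ/R`, and the product rule applied to
`rⁿ log(r/R)` produces exactly these two terms. The identity is then the fundamental theorem of
calculus on `[ε, 1]`, with `Ψ(r(1), 1) = Ψ(λ, 1)`. -/

open Real MeasureTheory Filter Set
open scoped ENNReal NNReal

noncomputable section

def nullLagrangianPotential (n : ℕ) (κ ρ R : ℝ) : ℝ :=
  κ * ((n : ℝ) - 1) / n * ρ ^ n * Real.log (ρ / R)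

def energyIntegrand (n : ℕ) (κ : ℝ) (h r r' : ℝ → ℝ) (R : ℝ) : ℝ :=
  R ^ (n - 1) * Phi n κ h (r' R) (r R / R)

def modifiedIntegrand (n : ℕ) (κ : ℝ) (h r r' : ℝ → ℝ) (R : ℝ) : ℝ :=
  R ^ (n - 1) * ((κ / n) * r' R ^ n + h (del n r r' R) +
    κ * ((n : ℝ) - 1) * del n r r' R * (1 / n + Real.log (r R / R)))

theorem hasDerivWithinAt_nullLagrangianPotential {n : ℕ} (hn : 1 ≤ n) (κ : ℝ)
    {r : ℝ → ℝ} {r' R : ℝ} {s : Set ℝ} (hr : HasDerivWithinAt r r' s R)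
    (hρ : 0 < r R) (hR : 0 < R) :
    HasDerivWithinAt (fun x => nullLagrangianPotential n κ (r x) x)
      (κ * ((n : ℝ) - 1) / n * (r R ^ (n - 1) * r' * (n * Real.log (r R / R) + 1) - r R ^ n / R))
      s R := by
  have hq := hr.fun_div (hasDerivWithinAt_id (s := s) (x := R)) hR.ne'
  refine (((hr.fun_pow n).const_mul _).mul (hq.log (div_pos hρ hR).ne')).congr_deriv ?_
  obtain ⟨k, rfl⟩ : ∃ k, n = k + 1 := ⟨n - 1, by omega⟩
  simp only [id, Nat.add_sub_cancel, pow_succ]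
  field_simp
  ring

theorem modifiedIntegrand_sub_energyIntegrand {n : ℕ} (hn : 1 ≤ n) (κ : ℝ) (h r r' : ℝ → ℝ)
    {R : ℝ} (hR : R ≠ 0) :
    modifiedIntegrand n κ h r r' R - energyIntegrand n κ h r r' R
      = κ * ((n : ℝ) - 1) / n *
          (r R ^ (n - 1) * r' R * (n * Real.log (r R / R) + 1) - r R ^ n / R) := by
  obtain ⟨k, rfl⟩ : ∃ k, n = k + 1 := ⟨n - 1, by omega⟩
  simp only [modifiedIntegrand, energyIntegrand, Phi, del, Nat.add_sub_cancel, div_pow, pow_succ]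
  field_simp
  ring

theorem hasDerivWithinAt_nullLagrangianPotential_comp {n : ℕ} (hn : 1 ≤ n) (κ : ℝ)
    (h : ℝ → ℝ) {r r' : ℝ → ℝ} {R : ℝ} {s : Set ℝ} (hr : HasDerivWithinAt r (r' R) s R)
    (hρ : 0 < r R) (hR : 0 < R) :
    HasDerivWithinAt (fun x => nullLagrangianPotential n κ (r x) x)
      (modifiedIntegrand n κ h r r' R - energyIntegrand n κ h r r' R) s R :=
  (hasDerivWithinAt_nullLagrangianPotential hn κ hr hρ hR).congr_deriv
    (modifiedIntegrand_sub_energyIntegrand hn κ h r r' hR.ne').symm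

section Continuity

variable {n : ℕ} {κ : ℝ} {h r r' : ℝ → ℝ} {s : Set ℝ}
  (hh : ContinuousOn h (Ioi 0)) (hr : ContinuousOn r s) (hr' : ContinuousOn r' s)
  (hs : s ⊆ Ioi 0) (hpos : ∀ R ∈ s, 0 < r R) (hdpos : ∀ R ∈ s, 0 < r' R)
include hr hs

theorem continuousOn_div_id : ContinuousOn (fun R => r R / R) s :=
  hr.div continuousOn_id fun _ hR => (hs hR).ne'

include hh hr' hpos hdpos

theorem continuousOn_comp_del : ContinuousOn (fun R => h (del n r r' R)) s :=
  hh.comp (hr'.mul ((continuousOn_div_id hr hs).pow _)) fun R hR =>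
    mul_pos (hdpos R hR) (pow_pos (div_pos (hpos R hR) (hs hR)) _)

theorem continuousOn_energyIntegrand : ContinuousOn (energyIntegrand n κ h r r') s :=
  (continuousOn_pow _).mul ((continuousOn_const.mul ((hr'.pow _).add
    (continuousOn_const.mul ((continuousOn_div_id hr hs).pow _)))).add
    (continuousOn_comp_del hh hr hr' hs hpos hdpos))

theorem continuousOn_modifiedIntegrand : ContinuousOn (modifiedIntegrand n κ h r r') s := by
  have hq := continuousOn_div_id hr hs
  have hlog : ContinuousOn (fun R => Real.log (r R / R)) s :=
    hq.log fun R hR => (div_pos (hpos R hR) (hs hR)).ne'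
  exact (continuousOn_pow _).mul (((continuousOn_const.mul (hr'.pow _)).add
    (continuousOn_comp_del hh hr hr' hs hpos hdpos)).add
    ((continuousOn_const.mul (hr'.mul (hq.pow _))).mul (continuousOn_const.add hlog)))

end Continuity

theorem integral_Ioc_eq_sub_of_hasDerivWithinAt_Icc {f f' : ℝ → ℝ} {a b : ℝ} (hab : a ≤ b)
    (hf : ∀ x ∈ Icc a b, HasDerivWithinAt f (f' x) (Icc a b) x)
    (hf' : IntegrableOn f' (Ioc a b)) :
    ∫ x in Ioc a b, f' x = f b - f a := by
  rw [← intervalIntegral.integral_of_le hab]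
  refine intervalIntegral.integral_eq_sub_of_hasDerivAt_of_le hab
    (fun x hx => (hf x hx).continuousWithinAt)
    (fun x hx => (hf x (Ioo_subset_Icc_self hx)).hasDerivAt (Icc_mem_nhds hx.1 hx.2)) ?_
  exact (intervalIntegrable_iff_integrableOn_Ioc_of_le hab).2 hf'

theorem stmt7_general (n : ℕ) (hn : 2 ≤ n) (κ : ℝ)
    (h h' : ℝ → ℝ) (hh : ∀ d : ℝ, 0 < d → HasDerivAt h (h' d) d)
    (ε lam : ℝ) (hε : 0 < ε) (hε1 : ε < 1)
    (r r' : ℝ → ℝ)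
    (hderiv : ∀ R ∈ Set.Icc ε 1, HasDerivWithinAt r (r' R) (Set.Icc ε 1) R)
    (hc1 : ContinuousOn r' (Set.Icc ε 1))
    (hpos : ∀ R ∈ Set.Icc ε 1, 0 < r R)
    (hdpos : ∀ R ∈ Set.Icc ε 1, 0 < r' R)
    (hbc : r 1 = lam) :
    (∫ R in Set.Ioc ε 1, R ^ (n - 1) * Phi n κ h (r' R) (r R / R))
        - κ * ((n:ℝ) - 1) / n * (r ε) ^ n * Real.log (r ε / ε)
      = (∫ R in Set.Ioc ε 1, R ^ (n - 1) *
          ((κ / n) * (r' R) ^ n + h (del n r r' R) +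
            κ * ((n:ℝ) - 1) * del n r r' R * (1 / n + Real.log (r R / R))))
        - κ * ((n:ℝ) - 1) / n * lam ^ n * Real.log lam := by
  have hIcc : Icc ε 1 ⊆ Ioi 0 := fun R hR => hε.trans_le hR.1
  have hr : ContinuousOn r (Icc ε 1) := fun R hR => (hderiv R hR).continuousWithinAt
  have hh : ContinuousOn h (Ioi 0) := fun d hd => (hh d hd).continuousAt.continuousWithinAt
  have henergy : IntegrableOn (energyIntegrand n κ h r r') (Ioc ε 1) :=
    (continuousOn_energyIntegrand hh hr hc1 hIcc hpos hdpos).integrableOn_Icc.mono_set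
      Ioc_subset_Icc_self
  have hmodified : IntegrableOn (modifiedIntegrand n κ h r r') (Ioc ε 1) :=
    (continuousOn_modifiedIntegrand hh hr hc1 hIcc hpos hdpos).integrableOn_Icc.mono_set
      Ioc_subset_Icc_self
  have hFTC := integral_Ioc_eq_sub_of_hasDerivWithinAt_Icc hε1.le
    (fun R hR => hasDerivWithinAt_nullLagrangianPotential_comp (by omega) κ h (hderiv R hR)
      (hpos R hR) (hIcc hR)) (hmodified.sub henergy)
  rw [integral_sub hmodified henergy, hbc] at hFTC
  simp only [nullLagrangianPotential, div_one] at hFTC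
  exact (sub_eq_sub_iff_sub_eq_sub.mpr hFTC).symm

/-- the null-Lagrangian identity relating the original energy with its
boundary correction to the modified integrand, for any `C¹` deformation of the
punctured ball `[ε,1]` with `r(1) = λ`. -/
theorem stmt7 (n : ℕ) (hn : 2 ≤ n) (κ : ℝ) (hκ : 0 < κ)
    (h h' : ℝ → ℝ) (hh : ∀ d : ℝ, 0 < d → HasDerivAt h (h' d) d)
    (ε lam : ℝ) (hε : 0 < ε) (hε1 : ε < 1)
    (r r' : ℝ → ℝ)
    (hderiv : ∀ R ∈ Set.Icc ε 1, HasDerivWithinAt r (r' R) (Set.Icc ε 1) R)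
    (hc1 : ContinuousOn r' (Set.Icc ε 1))
    (hpos : ∀ R ∈ Set.Icc ε 1, 0 < r R)
    (hdpos : ∀ R ∈ Set.Icc ε 1, 0 < r' R)
    (hbc : r 1 = lam) :
    (∫ R in Set.Ioc ε 1, R ^ (n - 1) * Phi n κ h (r' R) (r R / R))
        - κ * ((n:ℝ) - 1) / n * (r ε) ^ n * Real.log (r ε / ε)
      = (∫ R in Set.Ioc ε 1, R ^ (n - 1) *
          ((κ / n) * (r' R) ^ n + h (del n r r' R) +
            κ * ((n:ℝ) - 1) * del n r r' R * (1 / n + Real.log (r R / R))))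
        - κ * ((n:ℝ) - 1) / n * lam ^ n * Real.log lam :=
  stmt7_general n hn κ h h' hh ε lam hε hε1 r r' hderiv hc1 hpos hdpos hbc

end
end
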